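/- arXiv:2209.02773 — 5 statements merged into one kernel-verified Lean document; each statement's English description precedes it below -/
import Mathlib

section
/- Let X be a complex Banach space. If X* satisfies the property: for all sequences (xₙ), (yₙ) in the unit sphere of X and every a* in the unit sphere of X* with ⟨xₙ, a*⟩ → 1 and ⟨yₙ, a*⟩ → 1, one has ‖xₙ − yₙ‖ → 0, then X* is uniformly smooth, i.e., for every x* in the unit sphere of X* there exists a unique x** in the unit sphere of X** such that for every ε > 0 there exists δ > 0 with ‖x** − g‖ < ε whenever g is in the closed unit ball of X** and Re⟨x*, g⟩ > 1 − δ. -/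
open NormedSpace Filter Topology Metric Set

lemma aux_sq {z : ℂ} (hz : ‖z‖ ≤ 1) : ‖z - 1‖ ^ 2 ≤ 2 * (1 - z.re) := by
  have h1 : ‖z - 1‖ ^ 2 = (z.re - 1)^2 + z.im^2 := by
    rw [Complex.sq_norm, Complex.normSq_apply]
    simp [sq]
  have h2 : z.re^2 + z.im^2 ≤ 1 := by
    have h3 : ‖z‖^2 ≤ 1 := by nlinarith [norm_nonneg z]
    rw [Complex.sq_norm, Complex.normSq_apply] at h3
    nlinarith
  nlinarith

lemma aux_tendsto_one {z : ℕ → ℂ} (hz : ∀ n, ‖z n‖ ≤ 1)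
    (h : Tendsto (fun n => (z n).re) atTop (𝓝 1)) : Tendsto z atTop (𝓝 1) := by
  rw [tendsto_iff_norm_sub_tendsto_zero]
  have hb : ∀ n, ‖z n - 1‖ ≤ Real.sqrt (2 * (1 - (z n).re)) := by
    intro n
    have h1 := aux_sq (hz n)
    have := Real.sqrt_le_sqrt h1
    rwa [Real.sqrt_sq (norm_nonneg _)] at this
  have h0 : Tendsto (fun n => 2 * (1 - (z n).re)) atTop (𝓝 (2 * (1 - 1))) :=
    (tendsto_const_nhds.sub h).const_mul 2
  have hs := (Real.continuous_sqrt.tendsto _).comp h0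
  rw [show (2:ℝ)*(1-1) = 0 by norm_num, Real.sqrt_zero] at hs
  exact squeeze_zero (fun n => norm_nonneg _) hb hs


lemma opnorm_le_of_unit {E : Type*} [NormedAddCommGroup E] [NormedSpace ℂ E]
    (T : E →L[ℂ] ℂ) {C : ℝ} (hC : 0 ≤ C) (h : ∀ b, ‖b‖ ≤ 1 → ‖T b‖ ≤ C) : ‖T‖ ≤ C := by
  refine T.opNorm_le_bound hC fun b => ?_
  rcases eq_or_ne b 0 with rfl | hb
  · simp
  · have hb' : (0:ℝ) < ‖b‖ := norm_pos_iff.mpr hb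
    have e1 : ‖((‖b‖⁻¹ : ℝ) : ℂ) • b‖ = 1 := by
      rw [norm_smul, Complex.norm_real, Real.norm_eq_abs, abs_of_pos (inv_pos.mpr hb')]
      field_simp
    have e2 := h _ (le_of_eq e1)
    rw [map_smul, norm_smul, Complex.norm_real, Real.norm_eq_abs, abs_of_pos (inv_pos.mpr hb')] at e2
    calc ‖T b‖ = ‖b‖ * (‖b‖⁻¹ * ‖T b‖) := by field_simp
      _ ≤ ‖b‖ * C := mul_le_mul_of_nonneg_left e2 (norm_nonneg b)
      _ = C * ‖b‖ := mul_comm _ _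

lemma helly2 {X : Type*} [NormedAddCommGroup X] [NormedSpace ℂ X]
    (g : StrongDual ℂ (StrongDual ℂ X)) (hg : ‖g‖ ≤ 1) (f₁ f₂ : StrongDual ℂ X) {η : ℝ} (hη : 0 < η) :
    ∃ y : X, ‖y‖ ≤ 1 ∧ ‖f₁ y - g f₁‖ < η ∧ ‖f₂ y - g f₂‖ < η := by
  set S : Set (ℂ × ℂ) := (fun y => (f₁ y, f₂ y)) '' closedBall (0:X) 1 with hSdef
  have hmem : ((g f₁, g f₂) : ℂ × ℂ) ∈ closure S := by
    by_contra hp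
    have hconv : Convex ℝ S := by
      rintro p₁ ⟨y₁, hy₁, rfl⟩ p₂ ⟨y₂, hy₂, rfl⟩ a b ha hb hab
      rw [mem_closedBall_zero_iff] at hy₁ hy₂
      refine ⟨(a:ℂ) • y₁ + (b:ℂ) • y₂, ?_, ?_⟩
      · rw [mem_closedBall_zero_iff]
        calc ‖(a:ℂ) • y₁ + (b:ℂ) • y₂‖ ≤ ‖(a:ℂ) • y₁‖ + ‖(b:ℂ) • y₂‖ := norm_add_le _ _
          _ = a * ‖y₁‖ + b * ‖y₂‖ := by
              rw [norm_smul, norm_smul, Complex.norm_real, Complex.norm_real,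
                Real.norm_eq_abs, Real.norm_eq_abs, abs_of_nonneg ha, abs_of_nonneg hb]
          _ ≤ a * 1 + b * 1 := by
              gcongr
          _ = 1 := by linarith
      · simp only [map_add, map_smul, Prod.smul_mk, Prod.mk_add_mk, Prod.ext_iff,
          Complex.real_smul, smul_eq_mul]
    obtain ⟨φ, u, hs, hu⟩ :=
      geometric_hahn_banach_closed_point hconv.closure isClosed_closure hp
    have hzw : ∀ z w : ℂ, ((z, w) : ℂ × ℂ) =
        z.re • ((1:ℂ), (0:ℂ)) + z.im • (Complex.I, 0) + w.re • (0, 1) + w.im • (0, Complex.I) := by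
      intro z w
      simp only [Prod.smul_mk, Prod.mk_add_mk, Prod.ext_iff, Complex.real_smul, smul_zero]
      constructor
      · rw [mul_one]; simpa using (Complex.re_add_im z).symm
      · simpa using (Complex.re_add_im w).symm
    have hφ : ∀ z w : ℂ, φ (z, w) =
        z.re * φ (1, 0) + z.im * φ (Complex.I, 0) + w.re * φ (0, 1) + w.im * φ (0, Complex.I) := by
      intro z w
      rw [hzw z w, map_add, map_add, map_add, map_smul, map_smul, map_smul, map_smul,
        smul_eq_mul, smul_eq_mul, smul_eq_mul, smul_eq_mul]
    set a₁ : ℂ := (φ (1,0) : ℂ) - (φ (Complex.I,0) : ℂ) * Complex.I with ha₁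
    set a₂ : ℂ := (φ (0,1) : ℂ) - (φ (0,Complex.I) : ℂ) * Complex.I with ha₂
    have hre : ∀ z w : ℂ, (a₁ * z + a₂ * w).re = φ (z, w) := by
      intro z w
      rw [hφ]
      simp [ha₁, ha₂, Complex.add_re, Complex.mul_re, Complex.sub_re, Complex.sub_im]
      ring
    set F : StrongDual ℂ X := a₁ • f₁ + a₂ • f₂ with hFdef
    have hFapp : ∀ y : X, F y = a₁ * f₁ y + a₂ * f₂ y := by
      intro y; simp [hFdef, smul_eq_mul]
    have hFy : ∀ y : X, ‖y‖ ≤ 1 → (F y).re < u := by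
      intro y hy
      have hmemS : ((f₁ y, f₂ y) : ℂ × ℂ) ∈ S :=
        ⟨y, by simpa [mem_closedBall_zero_iff] using hy, rfl⟩
      have h1 := hs _ (subset_closure hmemS)
      rw [hFapp, hre]; exact h1
    have hu0 : 0 < u := by
      have := hFy 0 (by simp)
      simpa using this
    have hFnorm : ∀ y : X, ‖y‖ ≤ 1 → ‖F y‖ ≤ u := by
      intro y hy
      rcases eq_or_ne (F y) 0 with h | h
      · simp [h, hu0.le]
      · set c : ℂ := (‖F y‖ : ℂ) / F y with hc_def
        have hc : ‖c‖ = 1 := by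
          have : ‖F y‖ ≠ 0 := by
            simpa using h
          rw [hc_def, norm_div, Complex.norm_real, norm_norm]
          field_simp
        have h1 : ‖c • y‖ ≤ 1 := by rw [norm_smul, hc, one_mul]; exact hy
        have h2 := hFy (c • y) h1
        have h3 : F (c • y) = ((‖F y‖ : ℝ) : ℂ) := by
          rw [map_smul, smul_eq_mul, hc_def]; field_simp
        rw [h3] at h2
        simpa using h2.le
    have hFle : ‖F‖ ≤ u := opnorm_le_of_unit F hu0.le hFnorm
    have hgF : g F = a₁ * g f₁ + a₂ * g f₂ := by simp [hFdef, smul_eq_mul]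
    have hcontr : (g F).re ≤ u := by
      calc (g F).re ≤ ‖g F‖ := Complex.re_le_norm _
        _ ≤ ‖g‖ * ‖F‖ := g.le_opNorm F
        _ ≤ 1 * u := mul_le_mul hg hFle (norm_nonneg _) zero_le_one
        _ = u := one_mul u
    rw [hgF, hre] at hcontr
    exact absurd hu (not_lt.mpr hcontr)
  obtain ⟨q, hqS, hq⟩ := Metric.mem_closure_iff.mp hmem η hη
  obtain ⟨y, hy, rfl⟩ := hqS
  rw [Prod.dist_eq] at hq
  rw [mem_closedBall_zero_iff] at hy
  refine ⟨y, hy, ?_, ?_⟩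
  · rw [← dist_eq_norm, dist_comm]
    exact lt_of_le_of_lt (le_max_left _ _) hq
  · rw [← dist_eq_norm, dist_comm]
    exact lt_of_le_of_lt (le_max_right _ _) hq

/-- If the dual of a complex Banach space `X` satisfies property 2, then it is
uniformly smooth. -/
theorem property_two_implies_dual_uniformly_smooth
    (X : Type*) [NormedAddCommGroup X] [NormedSpace ℂ X] [CompleteSpace X]
    (hprop : ∀ (x y : ℕ → X) (a : StrongDual ℂ X),
      (∀ n, ‖x n‖ = 1) → (∀ n, ‖y n‖ = 1) → ‖a‖ = 1 →
      Tendsto (fun n => a (x n)) atTop (𝓝 1) →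
      Tendsto (fun n => a (y n)) atTop (𝓝 1) →
      Tendsto (fun n => ‖x n - y n‖) atTop (𝓝 0)) :
    ∀ xs : StrongDual ℂ X, ‖xs‖ = 1 →
      ∃! xss : StrongDual ℂ (StrongDual ℂ X), ‖xss‖ = 1 ∧
        ∀ ε : ℝ, 0 < ε → ∃ δ : ℝ, 0 < δ ∧
          ∀ g : StrongDual ℂ (StrongDual ℂ X), ‖g‖ ≤ 1 → 1 - δ < (g xs).re → ‖xss - g‖ < ε := by
  intro xs hxs
  have h12 : Tendsto (fun n : ℕ => 1/((n:ℝ)+2)) atTop (𝓝 0) := by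
    apply squeeze_zero (g := fun n : ℕ => 1/((n:ℝ)+1)) (fun n => by positivity)
    · intro n
      apply one_div_le_one_div_of_le (by positivity)
      linarith
    · exact tendsto_one_div_add_atTop_nhds_zero_nat
  have h11 : Tendsto (fun n : ℕ => 1 - 1/((n:ℝ)+1)) atTop (𝓝 1) := by
    have h := Tendsto.sub (tendsto_const_nhds : Tendsto (fun _ : ℕ => (1:ℝ)) atTop (𝓝 1))
      tendsto_one_div_add_atTop_nhds_zero_nat
    simpa using h
  -- normalization key
  have hkey : ∀ v : ℕ → X, (∀ n, ‖v n‖ ≤ 1) → (∀ n : ℕ, 1 - 1/((n:ℝ)+2) < (xs (v n)).re) →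
      ∃ v' : ℕ → X, (∀ n, ‖v' n‖ = 1) ∧ (∀ n : ℕ, ‖v' n - v n‖ ≤ 1/((n:ℝ)+2)) ∧
        Tendsto (fun n => xs (v' n)) atTop (𝓝 1) := by
    intro v hv1 hv2
    have hhalf : ∀ n : ℕ, 1/((n:ℝ)+2) ≤ 1/2 := by
      intro n
      apply one_div_le_one_div_of_le (by norm_num)
      have : (0:ℝ) ≤ n := Nat.cast_nonneg n
      linarith
    have hrepos : ∀ n : ℕ, (0:ℝ) < (xs (v n)).re := by
      intro n
      have h1 := hv2 n; have h2 := hhalf n; linarith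
    have hrele : ∀ n : ℕ, (xs (v n)).re ≤ ‖v n‖ := by
      intro n
      calc (xs (v n)).re ≤ ‖xs (v n)‖ := Complex.re_le_norm _
        _ ≤ ‖xs‖ * ‖v n‖ := xs.le_opNorm _
        _ = ‖v n‖ := by rw [hxs, one_mul]
    have hnv : ∀ n : ℕ, 0 < ‖v n‖ := fun n => lt_of_lt_of_le (hrepos n) (hrele n)
    have hinv : ∀ n : ℕ, 1 ≤ ‖v n‖⁻¹ := by
      intro n
      nlinarith [inv_pos.mpr (hnv n), mul_inv_cancel₀ (ne_of_gt (hnv n)), hv1 n]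
    refine ⟨fun n => ((‖v n‖⁻¹ : ℝ) : ℂ) • v n, ?_, ?_, ?_⟩
    · intro n
      rw [norm_smul, Complex.norm_real, Real.norm_eq_abs, abs_of_pos (inv_pos.mpr (hnv n))]
      exact inv_mul_cancel₀ (ne_of_gt (hnv n))
    · intro n
      have heq : ((‖v n‖⁻¹ : ℝ) : ℂ) • v n - v n = (((‖v n‖⁻¹ - 1 : ℝ)) : ℂ) • v n := by
        push_cast
        rw [sub_smul, one_smul]
      rw [heq, norm_smul, Complex.norm_real, Real.norm_eq_abs,
        abs_of_nonneg (by linarith [hinv n] : (0:ℝ) ≤ ‖v n‖⁻¹ - 1), sub_mul,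
        inv_mul_cancel₀ (ne_of_gt (hnv n)), one_mul]
      linarith [hv2 n, hrele n]
    · apply aux_tendsto_one
      · intro n
        calc ‖xs (((‖v n‖⁻¹ : ℝ) : ℂ) • v n)‖ ≤ ‖xs‖ * ‖((‖v n‖⁻¹ : ℝ) : ℂ) • v n‖ :=
              xs.le_opNorm _
          _ = 1 := by
              rw [hxs, one_mul, norm_smul, Complex.norm_real, Real.norm_eq_abs,
                abs_of_pos (inv_pos.mpr (hnv n)), inv_mul_cancel₀ (ne_of_gt (hnv n))]
      · have hform : ∀ n : ℕ, (xs (((‖v n‖⁻¹ : ℝ) : ℂ) • v n)).re = ‖v n‖⁻¹ * (xs (v n)).re := by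
          intro n
          rw [map_smul, smul_eq_mul, Complex.re_ofReal_mul]
        apply tendsto_of_tendsto_of_tendsto_of_le_of_le
            (g := fun n : ℕ => 1 - 1/((n:ℝ)+2)) (h := fun _ : ℕ => (1:ℝ))
        · have h := Tendsto.sub (tendsto_const_nhds : Tendsto (fun _ : ℕ => (1:ℝ)) atTop (𝓝 1)) h12
          simpa using h
        · exact tendsto_const_nhds
        · intro n
          simp only [hform]
          have := le_mul_of_one_le_left (hrepos n).le (hinv n)
          linarith [hv2 n]
        · intro n
          simp only [hform]
          have h1 : ‖v n‖⁻¹ * (xs (v n)).re ≤ ‖v n‖⁻¹ * ‖v n‖ :=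
            mul_le_mul_of_nonneg_left (hrele n) (inv_pos.mpr (hnv n)).le
          rwa [inv_mul_cancel₀ (ne_of_gt (hnv n))] at h1
  -- Step A : slices of the ball of X have small diameter
  have hA : ∀ ε : ℝ, 0 < ε → ∃ δ : ℝ, 0 < δ ∧ ∀ v w : X, ‖v‖ ≤ 1 → ‖w‖ ≤ 1 →
      1 - δ < (xs v).re → 1 - δ < (xs w).re → ‖v - w‖ < ε := by
    by_contra hcon
    push_neg at hcon
    obtain ⟨ε, hε, hbad⟩ := hcon
    have hsel : ∀ n : ℕ, ∃ v w : X, ‖v‖ ≤ 1 ∧ ‖w‖ ≤ 1 ∧ 1 - 1/((n:ℝ)+2) < (xs v).re ∧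
        1 - 1/((n:ℝ)+2) < (xs w).re ∧ ε ≤ ‖v - w‖ := by
      intro n
      obtain ⟨v, w, h1, h2, h3, h4, h5⟩ := hbad (1/((n:ℝ)+2)) (by positivity)
      exact ⟨v, w, h1, h2, h3, h4, h5⟩
    choose v w hv1 hw1 hv2 hw2 hvw using hsel
    obtain ⟨v', hv'1, hv'2, hv'3⟩ := hkey v hv1 hv2
    obtain ⟨w', hw'1, hw'2, hw'3⟩ := hkey w hw1 hw2
    have hT := hprop v' w' xs hv'1 hw'1 hxs hv'3 hw'3
    have e1 : ∀ᶠ n in atTop, ‖v' n - w' n‖ < ε/2 := hT.eventually (gt_mem_nhds (by linarith))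
    have e2 : ∀ᶠ n : ℕ in atTop, 1/((n:ℝ)+2) < ε/8 := h12.eventually (gt_mem_nhds (by linarith))
    obtain ⟨n, h1, h2⟩ := (e1.and e2).exists
    have htri : ‖v n - w n‖ ≤ ‖v n - v' n‖ + ‖v' n - w' n‖ + ‖w' n - w n‖ := by
      have heq : v n - w n = (v n - v' n) + (v' n - w' n) + (w' n - w n) := by abel
      rw [heq]
      exact norm_add₃_le
    rw [norm_sub_rev (v n) (v' n)] at htri
    have := hvw n
    have hv2' := hv'2 n
    have hw2' := hw'2 n
    linarith
  -- Step B : the exposed point x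
  have hsel2 : ∀ n : ℕ, ∃ y : X, ‖y‖ ≤ 1 ∧ 1 - 1/((n:ℝ)+1) < (xs y).re := by
    intro n
    have hlt : 1 - 1/((n:ℝ)+1) < ‖xs‖ := by
      rw [hxs]
      have : (0:ℝ) < 1/((n:ℝ)+1) := by positivity
      linarith
    obtain ⟨z, hz1, hz2⟩ := xs.exists_lt_apply_of_lt_opNorm hlt
    have h0 : (0:ℝ) ≤ 1 - 1/((n:ℝ)+1) := by
      rw [sub_nonneg]
      apply div_le_one_of_le₀ <;> [linarith [Nat.cast_nonneg (α := ℝ) n]; positivity]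
    have hne : xs z ≠ 0 := by
      intro h
      rw [h, norm_zero] at hz2
      linarith
    refine ⟨(((‖xs z‖ : ℝ) : ℂ) / xs z) • z, ?_, ?_⟩
    · rw [norm_smul, norm_div, Complex.norm_real, norm_norm,
        div_self (norm_ne_zero_iff.mpr hne), one_mul]
      exact hz1.le
    · rw [map_smul, smul_eq_mul, div_mul_cancel₀ _ hne, Complex.ofReal_re]
      exact hz2
  choose uu hu1 hu2 using hsel2
  have hC : CauchySeq uu := by
    rw [Metric.cauchySeq_iff]
    intro ε hε
    obtain ⟨δ, hδ, hδ2⟩ := hA ε hε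
    obtain ⟨N, hN⟩ := exists_nat_one_div_lt hδ
    refine ⟨N, fun m hm n hn => ?_⟩
    have hmono : ∀ k : ℕ, N ≤ k → 1 - δ < (xs (uu k)).re := by
      intro k hk
      have h1 : 1/((k:ℝ)+1) ≤ 1/((N:ℝ)+1) := by
        apply one_div_le_one_div_of_le (by positivity)
        exact_mod_cast Nat.succ_le_succ hk
      linarith [hu2 k]
    rw [dist_eq_norm]
    exact hδ2 _ _ (hu1 m) (hu1 n) (hmono m hm) (hmono n hn)
  obtain ⟨x, hx⟩ := cauchySeq_tendsto_of_complete hC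
  have hx1 : ‖x‖ ≤ 1 := le_of_tendsto' hx.norm hu1
  have hxsx : xs x = 1 := by
    have ht : Tendsto (fun n => xs (uu n)) atTop (𝓝 (xs x)) :=
      (xs.continuous.tendsto x).comp hx
    have hre : Tendsto (fun n => (xs (uu n)).re) atTop (𝓝 ((xs x).re)) :=
      (Complex.continuous_re.tendsto _).comp ht
    have hge : 1 ≤ (xs x).re :=
      le_of_tendsto_of_tendsto' h11 hre (fun n => (hu2 n).le)
    have habs : ‖xs x‖ ≤ 1 := by
      calc ‖xs x‖ ≤ ‖xs‖ * ‖x‖ := xs.le_opNorm x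
        _ ≤ 1 := by rw [hxs, one_mul]; exact hx1
    have hsq : (xs x).re^2 + (xs x).im^2 ≤ 1 := by
      have h3 := habs
      have h4 : ‖xs x‖ ^ 2 = (xs x).re^2 + (xs x).im^2 := by
        rw [Complex.sq_norm, Complex.normSq_apply]; ring
      nlinarith [norm_nonneg (xs x)]
    have hre1 : (xs x).re = 1 := le_antisymm (by nlinarith [sq_nonneg ((xs x).im)]) hge
    have him : (xs x).im = 0 := by
      have h5 : (xs x).im ^ 2 ≤ 0 := by nlinarith
      have := sq_eq_zero_iff.mp (le_antisymm h5 (sq_nonneg _))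
      exact this
    exact Complex.ext (by simp [hre1]) (by simp [him])
  have hx2 : ‖x‖ = 1 := by
    refine le_antisymm hx1 ?_
    have h1 : ‖xs x‖ ≤ ‖xs‖ * ‖x‖ := xs.le_opNorm x
    rw [hxsx, hxs, one_mul] at h1
    simpa using h1
  set xss : StrongDual ℂ (StrongDual ℂ X) := inclusionInDoubleDual ℂ X x with hxssdef
  have hxss_apply : ∀ f : StrongDual ℂ X, xss f = f x := fun f => dual_def ℂ X x f
  have hxssnorm : ‖xss‖ = 1 := by
    refine le_antisymm (le_trans (double_dual_bound ℂ X x) hx1) ?_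
    have h1 : ‖xss xs‖ ≤ ‖xss‖ * ‖xs‖ := xss.le_opNorm xs
    rw [hxss_apply, hxsx, hxs, mul_one] at h1
    simpa using h1
  refine ⟨xss, ⟨hxssnorm, ?_⟩, ?_⟩
  · intro ε hε
    obtain ⟨δA, hδA, hAprop⟩ := hA (ε/3) (by linarith)
    refine ⟨δA/2, by linarith, ?_⟩
    intro g hg hgre
    set η := min (δA/2) (ε/3) with hηdef
    have hη0 : 0 < η := lt_min (by linarith) (by linarith)
    have hbound : ∀ b : StrongDual ℂ X, ‖b‖ ≤ 1 → ‖(xss - g) b‖ ≤ 2*ε/3 := by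
      intro b hb
      obtain ⟨y, hy1, hy2, hy3⟩ := helly2 g hg xs b hη0
      have hrey : 1 - δA < (xs y).re := by
        have h1 : (g xs).re - (xs y).re ≤ ‖xs y - g xs‖ := by
          have h2 := Complex.abs_re_le_norm (xs y - g xs)
          rw [Complex.sub_re] at h2
          calc (g xs).re - (xs y).re ≤ |(xs y).re - (g xs).re| := by
                rw [abs_sub_comm]; exact le_abs_self _
            _ ≤ ‖xs y - g xs‖ := h2
        have hηle : η ≤ δA/2 := min_le_left _ _
        linarith [hy2]
      have hdiff : ‖x - y‖ < ε/3 := by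
        apply hAprop x y hx1 hy1 _ hrey
        rw [hxsx, Complex.one_re]
        linarith
      have happ : (xss - g) b = (b x - b y) + (b y - g b) := by
        rw [ContinuousLinearMap.sub_apply, hxss_apply]
        ring
      have hb1 : ‖b x - b y‖ ≤ ε/3 := by
        have : b x - b y = b (x - y) := by rw [map_sub]
        rw [this]
        calc ‖b (x - y)‖ ≤ ‖b‖ * ‖x - y‖ := b.le_opNorm _
          _ ≤ 1 * (ε/3) := by
              apply mul_le_mul hb hdiff.le (norm_nonneg _) zero_le_one
          _ = ε/3 := one_mul _
      have hb2 : ‖b y - g b‖ ≤ ε/3 := le_trans hy3.le (min_le_right _ _)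
      calc ‖(xss - g) b‖ ≤ ‖b x - b y‖ + ‖b y - g b‖ := by
            rw [happ]; exact norm_add_le _ _
        _ ≤ 2*ε/3 := by linarith
    have := opnorm_le_of_unit (xss - g) (by linarith) hbound
    linarith
  · rintro y ⟨hy1, hy2⟩
    have hlt : ∀ ε : ℝ, 0 < ε → ‖y - xss‖ < ε := by
      intro ε hε
      obtain ⟨δ, hδ, h⟩ := hy2 ε hε
      apply h xss (le_of_eq hxssnorm)
      rw [hxss_apply, hxsx, Complex.one_re]
      linarith
    have h0 : ‖y - xss‖ ≤ 0 := by
      by_contra h'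
      push_neg at h'
      exact absurd (hlt _ h') (lt_irrefl _)
    exact sub_eq_zero.mp (norm_le_zero_iff.mp h0)
end

section
/- Let X be a complex Banach space. The norm of X* is Fréchet differentiable (i.e., for every x* ∈ X* with x* ≠ 0, lim_{‖h‖→0} (‖x* + h‖ + ‖x* − h‖ − 2‖x*‖)/‖h‖ = 0) if and only if X* satisfies: for all sequences (xₙ), (yₙ) in the unit sphere of X and every a* in the unit sphere of X* with ⟨xₙ, a*⟩ → 1 and ⟨yₙ, a*⟩ → 1, one has ‖xₙ − yₙ‖ → 0. -/
open NormedSpace Filter Topology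

section Helpers

variable {X : Type*} [NormedAddCommGroup X] [NormedSpace ℂ X]

lemma phase_trick (g : StrongDual ℂ X) {u : X} (hu : ‖u‖ = 1) (hgu : g u ≠ 0) :
    ∃ x : X, ‖x‖ = 1 ∧ g x = (‖g u‖ : ℂ) := by
  refine ⟨((‖g u‖ : ℂ) / g u) • u, ?_, ?_⟩
  · rw [norm_smul, hu, mul_one, norm_div, Complex.norm_real, norm_norm,
      div_self (norm_ne_zero_iff.mpr hgu)]
  · rw [map_smul, smul_eq_mul, div_mul_cancel₀ _ hgu]

lemma exists_unit_re_lt (g : StrongDual ℂ X) (hg : g ≠ 0) {δ : ℝ} (hδ : 0 < δ) :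
    ∃ x : X, ‖x‖ = 1 ∧ ‖g‖ - δ < (g x).re := by
  have key : ∃ u : X, ‖u‖ = 1 ∧ g u ≠ 0 ∧ ‖g‖ - δ < ‖g u‖ := by
    by_cases hc : 0 ≤ ‖g‖ - δ
    · have h1 : ¬ ‖g‖ ≤ ‖g‖ - δ := by linarith
      rw [ContinuousLinearMap.opNorm_le_iff hc] at h1
      push_neg at h1
      obtain ⟨v, hv⟩ := h1
      have hv0 : v ≠ 0 := by
        rintro rfl; simp at hv
      have hvn : (0:ℝ) < ‖v‖ := norm_pos_iff.mpr hv0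
      have hgv : g v ≠ 0 := by
        intro h; rw [h] at hv; simp at hv; nlinarith
      refine ⟨((‖v‖:ℂ))⁻¹ • v, ?_, ?_, ?_⟩
      · rw [norm_smul, norm_inv, Complex.norm_real, norm_norm,
          inv_mul_cancel₀ hvn.ne']
      · rw [map_smul]; simp [hgv, hvn.ne']
      · rw [map_smul, norm_smul, norm_inv, Complex.norm_real, norm_norm]
        rw [lt_inv_mul_iff₀ hvn]
        linarith
    · push_neg at hc
      obtain ⟨v, hv⟩ : ∃ v, g v ≠ 0 := by
        by_contra h; push_neg at h
        exact hg (ContinuousLinearMap.ext fun v => by simp [h v])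
      have hv0 : v ≠ 0 := by rintro rfl; simp at hv
      have hvn : (0:ℝ) < ‖v‖ := norm_pos_iff.mpr hv0
      refine ⟨((‖v‖:ℂ))⁻¹ • v, ?_, ?_, ?_⟩
      · rw [norm_smul, norm_inv, Complex.norm_real, norm_norm,
          inv_mul_cancel₀ hvn.ne']
      · rw [map_smul]; simp [hv, hvn.ne']
      · exact hc.trans_le (norm_nonneg _)
  obtain ⟨u, hu, hgu, hlt⟩ := key
  obtain ⟨x, hx, hgx⟩ := phase_trick g hu hgu
  exact ⟨x, hx, by rw [hgx]; simpa using hlt⟩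

lemma tendsto_one_of_re {z : ℕ → ℂ} (hb : ∀ n, ‖z n‖ ≤ 1)
    (hr : Tendsto (fun n => (z n).re) atTop (𝓝 1)) : Tendsto z atTop (𝓝 1) := by
  rw [tendsto_iff_norm_sub_tendsto_zero]
  have hsq : Tendsto (fun n => ‖z n - 1‖ ^ 2) atTop (𝓝 0) := by
    have h2 : Tendsto (fun n => 2 - 2 * (z n).re) atTop (𝓝 0) := by
      have := ((tendsto_const_nhds (x := (2:ℝ))).sub (hr.const_mul 2))
      simpa using this
    refine squeeze_zero (fun n => by positivity) (fun n => ?_) h2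
    have h1 : ‖z n - 1‖ ^ 2 = (z n).re ^ 2 + (z n).im ^ 2 - 2 * (z n).re + 1 := by
      rw [Complex.sq_norm]
      simp [Complex.normSq_apply]
      ring
    have h2 : (z n).re ^ 2 + (z n).im ^ 2 ≤ 1 := by
      have := hb n
      have h3 : ‖z n‖ ^ 2 ≤ 1 := by nlinarith [norm_nonneg (z n)]
      rw [Complex.sq_norm] at h3
      simpa [Complex.normSq_apply, sq] using h3
    nlinarith
  have h4 := hsq.sqrt
  rw [Real.sqrt_zero] at h4
  refine h4.congr fun n => ?_
  exact Real.sqrt_sq (norm_nonneg _)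

set_option maxHeartbeats 1000000 in
lemma forward_dir (X : Type*) [NormedAddCommGroup X] [NormedSpace ℂ X]
    (hF : ∀ xs : StrongDual ℂ X, xs ≠ 0 →
      Tendsto (fun h : StrongDual ℂ X => (‖xs + h‖ + ‖xs - h‖ - 2 * ‖xs‖) / ‖h‖)
        (𝓝[≠] (0 : StrongDual ℂ X)) (𝓝 0)) :
    ∀ (x y : ℕ → X) (a : StrongDual ℂ X),
      (∀ n, ‖x n‖ = 1) → (∀ n, ‖y n‖ = 1) → ‖a‖ = 1 →
      Tendsto (fun n => a (x n)) atTop (𝓝 1) →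
      Tendsto (fun n => a (y n)) atTop (𝓝 1) →
      Tendsto (fun n => ‖x n - y n‖) atTop (𝓝 0) := by
  intro x y a hx hy ha hax hay
  have ha0 : a ≠ 0 := by
    intro h; rw [h] at ha; simp at ha
  by_contra hcon
  rw [Metric.tendsto_atTop] at hcon
  push_neg at hcon
  obtain ⟨ε, hε, hcon⟩ := hcon
  have hq := hF a ha0
  rw [Metric.tendsto_nhdsWithin_nhds] at hq
  obtain ⟨δ, hδ, hq⟩ := hq (ε/2) (by positivity)
  set t : ℝ := δ/2 with ht
  have ht0 : 0 < t := by positivity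
  -- real parts tend to 1
  have hrx : Tendsto (fun n => (a (x n)).re) atTop (𝓝 1) := by
    have := (Complex.continuous_re.tendsto (1:ℂ)).comp hax
    exact this
  have hry : Tendsto (fun n => (a (y n)).re) atTop (𝓝 1) := by
    have := (Complex.continuous_re.tendsto (1:ℂ)).comp hay
    exact this
  have hlt : 1 - t*ε/8 < 1 := by nlinarith
  have h1 := hrx.eventually (eventually_gt_nhds hlt)
  have h2 := hry.eventually (eventually_gt_nhds hlt)
  obtain ⟨N, hN⟩ := (h1.and h2).exists_forall_of_atTop
  obtain ⟨n, hnN, hn⟩ := hcon N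
  obtain ⟨hn1, hn2⟩ := hN n hnN
  rw [Real.dist_eq, sub_zero, abs_of_nonneg (norm_nonneg _)] at hn
  set z : X := x n - y n with hz
  have hz0 : z ≠ 0 := by
    intro h; rw [h] at hn; simp at hn; linarith
  obtain ⟨g, hg1, hgz⟩ := exists_dual_vector ℂ z (norm_ne_zero_iff.mpr hz0)
  set h : StrongDual ℂ X := (t:ℂ) • g with hh
  have hhn : ‖h‖ = t := by
    rw [hh, norm_smul, Complex.norm_real, Real.norm_eq_abs, abs_of_pos ht0, hg1, mul_one]
  have hne : h ≠ 0 := by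
    intro hc
    rw [hc, norm_zero] at hhn
    exact ht0.ne hhn
  have hdist : dist h 0 < δ := by
    rw [dist_zero_right, hhn]; linarith
  have hmem : h ∈ ({(0:StrongDual ℂ X)}ᶜ : Set _) := hne
  have key := hq hmem hdist
  rw [Real.dist_eq, sub_zero] at key
  -- lower bound on the quotient
  have hre1 : ((a + h) (x n)).re ≤ ‖a + h‖ := by
    calc ((a + h) (x n)).re ≤ ‖(a + h) (x n)‖ := Complex.re_le_norm _
      _ ≤ ‖a + h‖ * ‖x n‖ := (a + h).le_opNorm _
      _ = ‖a + h‖ := by rw [hx n, mul_one]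
  have hre2 : ((a - h) (y n)).re ≤ ‖a - h‖ := by
    calc ((a - h) (y n)).re ≤ ‖(a - h) (y n)‖ := Complex.re_le_norm _
      _ ≤ ‖a - h‖ * ‖y n‖ := (a - h).le_opNorm _
      _ = ‖a - h‖ := by rw [hy n, mul_one]
  have hhz : (h (x n)).re - (h (y n)).re = t * ‖z‖ := by
    have e0 : h (x n) - h (y n) = h z := by rw [hz, map_sub]
    have h3 : (h z).re = t * ‖z‖ := by
      rw [hh, ContinuousLinearMap.smul_apply, hgz, smul_eq_mul]
      simp [RCLike.ofReal_re, Complex.ofReal_re, Complex.mul_re]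
    have e1 : (h (x n)).re - (h (y n)).re = (h (x n) - h (y n)).re := by
      rw [Complex.sub_re]
    rw [e1, e0, h3]
  have hnum : t * (3*ε/4) ≤ ‖a + h‖ + ‖a - h‖ - 2 * ‖a‖ := by
    have e1 : ((a + h) (x n)).re = (a (x n)).re + (h (x n)).re := by
      rw [ContinuousLinearMap.add_apply, Complex.add_re]
    have e2 : ((a - h) (y n)).re = (a (y n)).re - (h (y n)).re := by
      rw [ContinuousLinearMap.sub_apply, Complex.sub_re]
    have hzε : ε ≤ ‖z‖ := hn
    nlinarith [hre1, hre2]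
  have hq2 : 3*ε/4 ≤ (‖a + h‖ + ‖a - h‖ - 2 * ‖a‖) / ‖h‖ := by
    rw [hhn, le_div_iff₀ ht0]
    linarith [hnum]
  have := le_abs_self ((‖a + h‖ + ‖a - h‖ - 2 * ‖a‖) / ‖h‖)
  linarith

set_option maxHeartbeats 1000000 in
lemma reverse_dir (X : Type*) [NormedAddCommGroup X] [NormedSpace ℂ X]
    (hP : ∀ (x y : ℕ → X) (a : StrongDual ℂ X),
      (∀ n, ‖x n‖ = 1) → (∀ n, ‖y n‖ = 1) → ‖a‖ = 1 →
      Tendsto (fun n => a (x n)) atTop (𝓝 1) →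
      Tendsto (fun n => a (y n)) atTop (𝓝 1) →
      Tendsto (fun n => ‖x n - y n‖) atTop (𝓝 0)) :
    ∀ f : StrongDual ℂ X, f ≠ 0 →
      Tendsto (fun h : StrongDual ℂ X => (‖f + h‖ + ‖f - h‖ - 2 * ‖f‖) / ‖h‖)
        (𝓝[≠] (0 : StrongDual ℂ X)) (𝓝 0) := by
  intro f hf
  have hfn : 0 < ‖f‖ := norm_pos_iff.mpr hf
  by_contra hcon
  rw [Metric.tendsto_nhdsWithin_nhds] at hcon
  push_neg at hcon
  obtain ⟨ε, hε, hcon⟩ := hcon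
  choose h hmem hdist hqe using fun n : ℕ => hcon (‖f‖/(n+2)) (by positivity)
  have hne : ∀ n, h n ≠ 0 := fun n => hmem n
  have hpos : ∀ n, 0 < ‖h n‖ := fun n => norm_pos_iff.mpr (hne n)
  have hsmall : ∀ n, ‖h n‖ < ‖f‖/(n+2) := by
    intro n
    have := hdist n
    rwa [dist_zero_right] at this
  -- numerator nonneg and key inequality
  have hnum : ∀ n, ε * ‖h n‖ ≤ ‖f + h n‖ + ‖f - h n‖ - 2 * ‖f‖ := by
    intro n
    have hnn : 0 ≤ ‖f + h n‖ + ‖f - h n‖ - 2 * ‖f‖ := by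
      have t1 : ‖(f + h n) + (f - h n)‖ ≤ ‖f + h n‖ + ‖f - h n‖ := norm_add_le _ _
      have t2 : (f + h n) + (f - h n) = (2:ℝ) • f := by
        exact (by abel : f + h n + (f - h n) = f + f).trans (two_smul ℝ f).symm
      rw [t2, norm_smul] at t1
      simp only [Real.norm_ofNat] at t1
      linarith
    have := hqe n
    rw [Real.dist_eq, sub_zero,
      abs_of_nonneg (div_nonneg hnn (norm_nonneg _))] at this
    rw [le_div_iff₀ (hpos n)] at this
    linarith
  -- f ± h n are nonzero
  have hfrac : ∀ n : ℕ, ‖f‖/((n:ℝ)+2) ≤ ‖f‖/2 := by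
    intro n
    apply div_le_div_of_nonneg_left hfn.le (by norm_num)
    · have : (0:ℝ) ≤ (n:ℝ) := Nat.cast_nonneg n
      linarith
  have hfp : ∀ n, f + h n ≠ 0 := by
    intro n hc
    have : h n = -f := by
      have := congrArg (fun w => w - f) hc
      simpa [sub_eq_iff_eq_add] using this
    have h2 : ‖h n‖ = ‖f‖ := by rw [this, norm_neg]
    have := (hsmall n).trans_le (hfrac n)
    rw [h2] at this
    linarith
  have hfm : ∀ n, f - h n ≠ 0 := by
    intro n hc
    have : h n = f := by
      have : f = h n := by
        have := sub_eq_zero.mp hc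
        exact this
      exact this.symm
    have h2 : ‖h n‖ = ‖f‖ := by rw [this]
    have := (hsmall n).trans_le (hfrac n)
    rw [h2] at this
    linarith
  -- choose norming points
  choose x hx hx2 using fun n =>
    exists_unit_re_lt (f + h n) (hfp n) (δ := ε * ‖h n‖ / 8)
      (by have := hpos n; positivity)
  choose y hy hy2 using fun n =>
    exists_unit_re_lt (f - h n) (hfm n) (δ := ε * ‖h n‖ / 8)
      (by have := hpos n; positivity)
  -- basic bounds
  have ufx : ∀ n, (f (x n)).re ≤ ‖f‖ := by
    intro n
    calc (f (x n)).re ≤ ‖f (x n)‖ := Complex.re_le_norm _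
      _ ≤ ‖f‖ * ‖x n‖ := f.le_opNorm _
      _ = ‖f‖ := by rw [hx n, mul_one]
  have ufy : ∀ n, (f (y n)).re ≤ ‖f‖ := by
    intro n
    calc (f (y n)).re ≤ ‖f (y n)‖ := Complex.re_le_norm _
      _ ≤ ‖f‖ * ‖y n‖ := f.le_opNorm _
      _ = ‖f‖ := by rw [hy n, mul_one]
  have uhx : ∀ n, |(h n (x n)).re| ≤ ‖h n‖ := by
    intro n
    calc |(h n (x n)).re| ≤ ‖h n (x n)‖ := Complex.abs_re_le_norm _
      _ ≤ ‖h n‖ * ‖x n‖ := (h n).le_opNorm _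
      _ = ‖h n‖ := by rw [hx n, mul_one]
  have uhy : ∀ n, |(h n (y n)).re| ≤ ‖h n‖ := by
    intro n
    calc |(h n (y n)).re| ≤ ‖h n (y n)‖ := Complex.abs_re_le_norm _
      _ ≤ ‖h n‖ * ‖y n‖ := (h n).le_opNorm _
      _ = ‖h n‖ := by rw [hy n, mul_one]
  have efx : ∀ n, ((f + h n) (x n)).re = (f (x n)).re + (h n (x n)).re := by
    intro n; rw [ContinuousLinearMap.add_apply, Complex.add_re]
  have efy : ∀ n, ((f - h n) (y n)).re = (f (y n)).re - (h n (y n)).re := by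
    intro n; rw [ContinuousLinearMap.sub_apply, Complex.sub_re]
  have htri1 : ∀ n, ‖f‖ - ‖h n‖ ≤ ‖f + h n‖ := by
    intro n
    have : ‖f‖ ≤ ‖f + h n‖ + ‖h n‖ := by
      have e : f = (f + h n) - h n := by abel
      calc ‖f‖ = ‖(f + h n) - h n‖ := by rw [← e]
        _ ≤ ‖f + h n‖ + ‖h n‖ := norm_sub_le _ _
    linarith
  have htri2 : ∀ n, ‖f‖ - ‖h n‖ ≤ ‖f - h n‖ := by
    intro n
    have : ‖f‖ ≤ ‖f - h n‖ + ‖h n‖ := by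
      have e : f = (f - h n) + h n := by abel
      calc ‖f‖ = ‖(f - h n) + h n‖ := by rw [← e]
        _ ≤ ‖f - h n‖ + ‖h n‖ := norm_add_le _ _
    linarith
  -- lower bounds on real parts
  have lbx : ∀ n, ‖f‖ - (2 + ε/8) * ‖h n‖ ≤ (f (x n)).re := by
    intro n
    have := hx2 n
    rw [efx n] at this
    have h1 := (abs_le.mp (uhx n)).2
    have h2 := htri1 n
    nlinarith [hpos n]
  have lby : ∀ n, ‖f‖ - (2 + ε/8) * ‖h n‖ ≤ (f (y n)).re := by
    intro n
    have := hy2 n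
    rw [efy n] at this
    have h1 := (abs_le.mp (uhy n)).1
    have h2 := htri2 n
    nlinarith [hpos n]
  -- ‖h n‖ → 0
  have hh0 : Tendsto (fun n => ‖h n‖) atTop (𝓝 0) := by
    have hb : Tendsto (fun n : ℕ => ‖f‖/((n:ℝ)+2)) atTop (𝓝 0) := by
      apply Tendsto.div_atTop (tendsto_const_nhds)
      exact tendsto_atTop_add_const_right _ 2 tendsto_natCast_atTop_atTop
    exact squeeze_zero (fun n => (norm_nonneg _)) (fun n => (hsmall n).le) hb
  -- Re (f (x n)) → ‖f‖
  have hrex : Tendsto (fun n => (f (x n)).re) atTop (𝓝 ‖f‖) := by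
    have hlow : Tendsto (fun n => ‖f‖ - (2 + ε/8) * ‖h n‖) atTop (𝓝 ‖f‖) := by
      have := (tendsto_const_nhds (x := ‖f‖)).sub (hh0.const_mul (2 + ε/8))
      simpa using this
    exact tendsto_of_tendsto_of_tendsto_of_le_of_le hlow tendsto_const_nhds
      (fun n => lbx n) (fun n => ufx n)
  have hrey : Tendsto (fun n => (f (y n)).re) atTop (𝓝 ‖f‖) := by
    have hlow : Tendsto (fun n => ‖f‖ - (2 + ε/8) * ‖h n‖) atTop (𝓝 ‖f‖) := by
      have := (tendsto_const_nhds (x := ‖f‖)).sub (hh0.const_mul (2 + ε/8))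
      simpa using this
    exact tendsto_of_tendsto_of_tendsto_of_le_of_le hlow tendsto_const_nhds
      (fun n => lby n) (fun n => ufy n)
  -- the normalized functional
  set a : StrongDual ℂ X := ((‖f‖:ℂ))⁻¹ • f with haa
  have ha : ‖a‖ = 1 := by
    rw [haa, norm_smul, norm_inv, Complex.norm_real, norm_norm,
      inv_mul_cancel₀ hfn.ne']
  have hare : ∀ v : X, (a v).re = ‖f‖⁻¹ * (f v).re := by
    intro v
    rw [haa, ContinuousLinearMap.smul_apply, smul_eq_mul, ← Complex.ofReal_inv,
      Complex.re_ofReal_mul]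
  have habd : ∀ (v : X), ‖v‖ = 1 → ‖a v‖ ≤ 1 := by
    intro v hv
    calc ‖a v‖ ≤ ‖a‖ * ‖v‖ := a.le_opNorm _
      _ = 1 := by rw [ha, hv, mul_one]
  have hax : Tendsto (fun n => a (x n)) atTop (𝓝 1) := by
    apply tendsto_one_of_re (fun n => habd _ (hx n))
    have : Tendsto (fun n => ‖f‖⁻¹ * (f (x n)).re) atTop (𝓝 (‖f‖⁻¹ * ‖f‖)) :=
      hrex.const_mul _
    rw [inv_mul_cancel₀ hfn.ne'] at this
    exact this.congr fun n => (hare (x n)).symm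
  have hay : Tendsto (fun n => a (y n)) atTop (𝓝 1) := by
    apply tendsto_one_of_re (fun n => habd _ (hy n))
    have : Tendsto (fun n => ‖f‖⁻¹ * (f (y n)).re) atTop (𝓝 (‖f‖⁻¹ * ‖f‖)) :=
      hrey.const_mul _
    rw [inv_mul_cancel₀ hfn.ne'] at this
    exact this.congr fun n => (hare (y n)).symm
  -- property 2 gives convergence
  have hzero := hP x y a hx hy ha hax hay
  -- but the differences are bounded below
  have hbig : ∀ n, 3*ε/4 ≤ ‖x n - y n‖ := by
    intro n
    have key := hnum n
    have b1 := hx2 n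
    have b2 := hy2 n
    rw [efx n] at b1
    rw [efy n] at b2
    have b3 : (h n (x n)).re - (h n (y n)).re ≤ ‖h n‖ * ‖x n - y n‖ := by
      have e : (h n (x n)).re - (h n (y n)).re = (h n (x n - y n)).re := by
        rw [map_sub, Complex.sub_re]
      rw [e]
      calc (h n (x n - y n)).re ≤ ‖h n (x n - y n)‖ := Complex.re_le_norm _
        _ ≤ ‖h n‖ * ‖x n - y n‖ := (h n).le_opNorm _
    have b4 := ufx n
    have b5 := ufy n
    have : ε * ‖h n‖ ≤ ‖h n‖ * ‖x n - y n‖ + 2 * (ε * ‖h n‖ / 8) := by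
      nlinarith
    have := hpos n
    nlinarith
  have := hzero.eventually (eventually_lt_nhds (show (0:ℝ) < 3*ε/4 by positivity))
  obtain ⟨n, hn⟩ := this.exists
  linarith [hbig n]


end Helpers

/-- The norm of the dual of a complex Banach space `X` is Fréchet differentiable
iff `X*` satisfies property 2. -/
theorem dual_frechet_iff_property_two
    (X : Type*) [NormedAddCommGroup X] [NormedSpace ℂ X] [CompleteSpace X] :
    (∀ xs : StrongDual ℂ X, xs ≠ 0 →
      Tendsto (fun h : StrongDual ℂ X => (‖xs + h‖ + ‖xs - h‖ - 2 * ‖xs‖) / ‖h‖)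
        (𝓝[≠] (0 : StrongDual ℂ X)) (𝓝 0)) ↔
    (∀ (x y : ℕ → X) (a : StrongDual ℂ X),
      (∀ n, ‖x n‖ = 1) → (∀ n, ‖y n‖ = 1) → ‖a‖ = 1 →
      Tendsto (fun n => a (x n)) atTop (𝓝 1) →
      Tendsto (fun n => a (y n)) atTop (𝓝 1) →
      Tendsto (fun n => ‖x n - y n‖) atTop (𝓝 0)) :=
  ⟨forward_dir X, reverse_dir X⟩
end

section
/- Let X be a complex Banach space. The norm of X* is Fréchet differentiable (i.e., for every x* ∈ X* with x* ≠ 0, lim_{‖h‖→0} (‖x* + h‖ + ‖x* − h‖ − 2‖x*‖)/‖h‖ = 0) if and only if X* is uniformly smooth, i.e., for every x* in the unit sphere of X* there exists a unique x** in the unit sphere of X** such that for every ε > 0 there exists δ > 0 with ‖x** − g‖ < ε whenever g is in the closed unit ball of X** and Re⟨x*, g⟩ > 1 − δ. -/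
open NormedSpace Filter Topology

section Aux

variable {Y : Type*} [NormedAddCommGroup Y] [NormedSpace ℂ Y]

/-- If the real part of a complex functional is bounded by `C` on the ball of radius `t`,
then its norm is at most `C / t`. -/
lemma norm_le_of_re_le {φ : StrongDual ℂ Y} {t C : ℝ} (ht : 0 < t) (hC : 0 ≤ C)
    (h : ∀ y : Y, ‖y‖ ≤ t → (φ y).re ≤ C) : ‖φ‖ ≤ C / t := by
  have key : ∀ y : Y, ‖y‖ ≤ t → ‖φ y‖ ≤ C := by
    intro y hy
    rcases eq_or_ne (φ y) 0 with h0 | h0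
    · simpa [h0] using hC
    · set c : ℂ := (‖φ y‖ : ℂ) / φ y with hc
      have hcn : ‖c‖ = 1 := by
        rw [hc, norm_div, Complex.norm_real, norm_norm,
          div_self (norm_ne_zero_iff.mpr h0)]
      have h1 : φ (c • y) = (‖φ y‖ : ℂ) := by
        rw [map_smul, smul_eq_mul, hc, div_mul_cancel₀ _ h0]
      have h2 := h (c • y) (by rw [norm_smul, hcn, one_mul]; exact hy)
      rw [h1] at h2
      simpa using h2
  apply ContinuousLinearMap.opNorm_le_bound _ (div_nonneg hC ht.le)
  intro y
  rcases eq_or_ne y 0 with rfl | hy0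
  · simp [div_nonneg hC ht.le]
  · have hny : (0:ℝ) < ‖y‖ := norm_pos_iff.mpr hy0
    have := key (((t / ‖y‖ : ℝ) : ℂ) • y) (by
      rw [norm_smul, Complex.norm_real, Real.norm_of_nonneg (div_nonneg ht.le hny.le),
        div_mul_cancel₀ _ hny.ne']
      )
    rw [map_smul, norm_smul, Complex.norm_real,
      Real.norm_of_nonneg (div_nonneg ht.le hny.le)] at this
    -- this : t / ‖y‖ * ‖φ y‖ ≤ C
    rw [div_mul_eq_mul_div, div_le_iff₀ hny] at this
    rw [div_mul_eq_mul_div, le_div_iff₀ ht]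
    nlinarith

/-- Šmulyan: Fréchet differentiability of the norm at a unit vector implies slices of the
dual unit ball determined by it have small diameter. -/
lemma slice_small {y : Y} (hy : ‖y‖ = 1)
    (hT : Tendsto (fun h : Y => (‖y + h‖ + ‖y - h‖ - 2 * ‖y‖) / ‖h‖) (𝓝[≠] (0:Y)) (𝓝 0))
    {ε : ℝ} (hε : 0 < ε) :
    ∃ δ : ℝ, 0 < δ ∧ ∀ g g' : StrongDual ℂ Y, ‖g‖ ≤ 1 → ‖g'‖ ≤ 1 →
      1 - δ < (g y).re → 1 - δ < (g' y).re → ‖g - g'‖ < ε := by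
  rw [Metric.tendsto_nhdsWithin_nhds] at hT
  obtain ⟨t, ht, hts⟩ := hT (ε/4) (by positivity)
  set s : ℝ := t / 2 with hs
  have hs0 : 0 < s := by positivity
  refine ⟨ε * s / 8, by positivity, ?_⟩
  intro g g' hg hg' hgy hg'y
  -- bound Re ((g - g') h) for ‖h‖ ≤ s
  have hre : ∀ h : Y, ‖h‖ ≤ s → (((g - g') : StrongDual ℂ Y) h).re ≤ ε * s / 2 := by
    intro h hh
    rcases eq_or_ne h 0 with rfl | hh0
    · simp; positivity
    · have hhp : (0:ℝ) < ‖h‖ := norm_pos_iff.mpr hh0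
      -- numerator bound from differentiability
      have hht : dist h (0:Y) < t := by
        rw [dist_zero_right]; calc ‖h‖ ≤ s := hh
        _ < t := by rw [hs]; linarith
      have hq := hts (Set.mem_compl_singleton_iff.mpr hh0) hht
      rw [Real.dist_eq, sub_zero] at hq
      have hnum : ‖y + h‖ + ‖y - h‖ - 2 < ε / 4 * ‖h‖ := by
        have h1 : (‖y + h‖ + ‖y - h‖ - 2 * ‖y‖) / ‖h‖ < ε / 4 :=
          lt_of_le_of_lt (le_abs_self _) hq
        rw [div_lt_iff₀ hhp] at h1
        rw [hy] at h1; linarith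
      -- Re g (y + h) ≤ ‖y+h‖, Re g' (y - h) ≤ ‖y-h‖
      have hb1 : (g (y + h)).re ≤ ‖y + h‖ := by
        calc (g (y + h)).re ≤ ‖g (y + h)‖ := Complex.re_le_norm _
        _ = ‖g (y + h)‖ := rfl
        _ ≤ ‖g‖ * ‖y + h‖ := g.le_opNorm _
        _ ≤ 1 * ‖y + h‖ := by gcongr
        _ = ‖y + h‖ := one_mul _
      have hb2 : (g' (y - h)).re ≤ ‖y - h‖ := by
        calc (g' (y - h)).re ≤ ‖g' (y - h)‖ := Complex.re_le_norm _
        _ = ‖g' (y - h)‖ := rfl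
        _ ≤ ‖g'‖ * ‖y - h‖ := g'.le_opNorm _
        _ ≤ 1 * ‖y - h‖ := by gcongr
        _ = ‖y - h‖ := one_mul _
      have e1 : (g (y + h)).re = (g y).re + (g h).re := by
        rw [map_add, Complex.add_re]
      have e2 : (g' (y - h)).re = (g' y).re - (g' h).re := by
        rw [map_sub, Complex.sub_re]
      have e3 : (((g - g') : StrongDual ℂ Y) h).re = (g h).re - (g' h).re := by
        rw [ContinuousLinearMap.sub_apply, Complex.sub_re]
      rw [e3]
      have hss : ‖h‖ ≤ s := hh
      nlinarith [hε.le, hs0.le]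
  have := norm_le_of_re_le hs0 (by positivity) hre
  calc ‖g - g'‖ ≤ ε * s / 2 / s := this
  _ = ε / 2 := by field_simp
  _ < ε := by linarith

end Aux

set_option maxHeartbeats 800000 in
/-- The norm of the dual of a complex Banach space `X` is Fréchet differentiable
iff `X*` is uniformly smooth. -/
theorem dual_frechet_iff_uniformly_smooth
    (X : Type*) [NormedAddCommGroup X] [NormedSpace ℂ X] [CompleteSpace X] :
    (∀ xs : StrongDual ℂ X, xs ≠ 0 →
      Tendsto (fun h : StrongDual ℂ X => (‖xs + h‖ + ‖xs - h‖ - 2 * ‖xs‖) / ‖h‖)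
        (𝓝[≠] (0 : StrongDual ℂ X)) (𝓝 0)) ↔
    (∀ xs : StrongDual ℂ X, ‖xs‖ = 1 →
      ∃! xss : StrongDual ℂ (StrongDual ℂ X), ‖xss‖ = 1 ∧
        ∀ ε : ℝ, 0 < ε → ∃ δ : ℝ, 0 < δ ∧
          ∀ g : StrongDual ℂ (StrongDual ℂ X), ‖g‖ ≤ 1 → 1 - δ < (g xs).re → ‖xss - g‖ < ε) := by
  constructor
  · -- Fréchet differentiable ⇒ uniformly smooth
    intro hF xs hxs
    have hxs0 : xs ≠ 0 := by
      intro h; rw [h, norm_zero] at hxs; norm_num at hxs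
    obtain ⟨f₀, hf₀n, hf₀x⟩ := exists_dual_vector ℂ xs (norm_ne_zero_iff.mpr hxs0)
    have hf₀re : (f₀ xs).re = 1 := by rw [hf₀x, hxs]; simp
    refine ⟨f₀, ⟨hf₀n, ?_⟩, ?_⟩
    · intro ε hε
      obtain ⟨δ, hδ, hδp⟩ := slice_small hxs (hF xs hxs0) hε
      exact ⟨δ, hδ, fun g hg hgre =>
        hδp f₀ g hf₀n.le hg (by rw [hf₀re]; linarith) hgre⟩
    · rintro f' ⟨hf'n, hf'p⟩
      by_contra hne
      have hpos : 0 < ‖f' - f₀‖ := norm_pos_iff.mpr (sub_ne_zero.mpr hne)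
      obtain ⟨δ, hδ, hδp⟩ := hf'p _ hpos
      exact lt_irrefl _ (hδp f₀ hf₀n.le (by rw [hf₀re]; linarith))
  · -- uniformly smooth ⇒ Fréchet differentiable
    intro hS xs hxs0
    have hR : (0:ℝ) < ‖xs‖ := norm_pos_iff.mpr hxs0
    set R : ℝ := ‖xs‖ with hRdef
    set y : StrongDual ℂ X := ((R:ℂ))⁻¹ • xs with hydef
    have hy1 : ‖y‖ = 1 := by
      rw [hydef, norm_smul, norm_inv, Complex.norm_real, Real.norm_of_nonneg hR.le]
      field_simp
      exact hRdef.symm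
    obtain ⟨f, ⟨hfn, hfp⟩, -⟩ := hS y hy1
    rw [Metric.tendsto_nhdsWithin_nhds]
    intro ε hε
    obtain ⟨δ, hδ, hδp⟩ := hfp (ε/2) (half_pos hε)
    refine ⟨min (δ*R/2) (R/2), by positivity, ?_⟩
    intro h hh0 hdist
    have hh0' : h ≠ 0 := hh0
    have hhp : (0:ℝ) < ‖h‖ := norm_pos_iff.mpr hh0'
    rw [dist_zero_right, lt_min_iff] at hdist
    obtain ⟨hd1, hd2⟩ := hdist
    -- xs + h and xs - h are nonzero
    have hp1 : (0:ℝ) < ‖xs + h‖ := by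
      have := norm_sub_norm_le xs (-h)
      have h2 : ‖xs - -h‖ = ‖xs + h‖ := by rw [sub_neg_eq_add]
      rw [h2, norm_neg] at this
      linarith
    have hp2 : (0:ℝ) < ‖xs - h‖ := by
      have := norm_sub_norm_le xs h
      linarith
    obtain ⟨g₁, hg₁n, hg₁x⟩ := exists_dual_vector ℂ (xs + h) hp1.ne'
    obtain ⟨g₂, hg₂n, hg₂x⟩ := exists_dual_vector ℂ (xs - h) hp2.ne'
    -- basic real-part facts
    have hre1 : (g₁ (xs + h)).re = ‖xs + h‖ := by rw [hg₁x]; simp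
    have hre2 : (g₂ (xs - h)).re = ‖xs - h‖ := by rw [hg₂x]; simp
    have habs : ∀ (g : StrongDual ℂ (StrongDual ℂ X)) (z : StrongDual ℂ X), ‖g‖ = 1 → (g z).re ≤ ‖z‖ := by
      intro g z hg
      calc (g z).re ≤ ‖g z‖ := Complex.re_le_norm _
      _ = ‖g z‖ := rfl
      _ ≤ ‖g‖ * ‖z‖ := g.le_opNorm _
      _ = ‖z‖ := by rw [hg, one_mul]
    have habs' : ∀ (g : StrongDual ℂ (StrongDual ℂ X)) (z : StrongDual ℂ X), ‖g‖ = 1 → -‖z‖ ≤ (g z).re := by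
      intro g z hg
      have := habs g (-z) hg
      rw [map_neg, Complex.neg_re, norm_neg] at this
      linarith
    -- slice membership of g₁, g₂
    have hyapp : ∀ g : StrongDual ℂ (StrongDual ℂ X), (g y).re = R⁻¹ * (g xs).re := by
      intro g
      rw [hydef, map_smul, smul_eq_mul, ← Complex.ofReal_inv, Complex.re_ofReal_mul]
    have hg₁xs : R - 2 * ‖h‖ ≤ (g₁ xs).re := by
      have e : (g₁ xs).re = (g₁ (xs + h)).re - (g₁ h).re := by
        rw [map_add, Complex.add_re]; ring
      have := habs g₁ h hg₁n
      have hn : R - ‖h‖ ≤ ‖xs + h‖ := by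
        have h3 := norm_sub_norm_le xs (-h)
        rw [sub_neg_eq_add, norm_neg] at h3
        linarith
      rw [e, hre1]; linarith
    have hg₂xs : R - 2 * ‖h‖ ≤ (g₂ xs).re := by
      have e : (g₂ xs).re = (g₂ (xs - h)).re + (g₂ h).re := by
        rw [show xs = (xs - h) + h by abel, map_add, Complex.add_re]
        simp [show xs - h + h = xs by abel]
      have := habs' g₂ h hg₂n
      have hn : R - ‖h‖ ≤ ‖xs - h‖ := by
        have := norm_sub_norm_le xs h
        linarith
      rw [e, hre2]; linarith
    have hslice : ∀ g : StrongDual ℂ (StrongDual ℂ X), R - 2 * ‖h‖ ≤ (g xs).re → 1 - δ < (g y).re := by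
      intro g hg
      rw [hyapp g]
      have : R⁻¹ * (R - 2 * ‖h‖) ≤ R⁻¹ * (g xs).re := by
        apply mul_le_mul_of_nonneg_left hg (by positivity)
      have e : R⁻¹ * (R - 2 * ‖h‖) = 1 - 2 * ‖h‖ / R := by field_simp
      have h2 : 2 * ‖h‖ / R < δ := by
        rw [div_lt_iff₀ hR]; linarith
      linarith
    have hfg₁ : ‖f - g₁‖ < ε/2 := hδp g₁ hg₁n.le (hslice g₁ hg₁xs)
    have hfg₂ : ‖f - g₂‖ < ε/2 := hδp g₂ hg₂n.le (hslice g₂ hg₂xs)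
    have hg₁g₂ : ‖g₁ - g₂‖ < ε := by
      calc ‖g₁ - g₂‖ ≤ ‖g₁ - f‖ + ‖f - g₂‖ := norm_sub_le_norm_sub_add_norm_sub _ _ _
      _ = ‖f - g₁‖ + ‖f - g₂‖ := by rw [norm_sub_rev]
      _ < ε/2 + ε/2 := by linarith
      _ = ε := by ring
    -- numerator bounds
    have hN0 : 0 ≤ ‖xs + h‖ + ‖xs - h‖ - 2 * R := by
      have e : (xs + h) + (xs - h) = xs + xs := by abel
      have h1 := norm_add_le (xs + h) (xs - h)
      rw [e] at h1
      have h2 : ‖xs + xs‖ = 2 * R := by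
        rw [show xs + xs = (2:ℝ) • xs from (two_smul ℝ xs).symm, norm_smul]
        norm_num
        exact hRdef.symm
      linarith
    have hNup : ‖xs + h‖ + ‖xs - h‖ - 2 * R < ε * ‖h‖ := by
      have e1 : ‖xs + h‖ + ‖xs - h‖ = (g₁ xs).re + (g₂ xs).re + ((g₁ h).re - (g₂ h).re) := by
        rw [← hre1, ← hre2, map_add, map_sub, Complex.add_re, Complex.sub_re]; ring
      have b1 : (g₁ xs).re ≤ R := habs g₁ xs hg₁n
      have b2 : (g₂ xs).re ≤ R := habs g₂ xs hg₂n
      have b3 : (g₁ h).re - (g₂ h).re ≤ ‖g₁ - g₂‖ * ‖h‖ := by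
        have e2 : (g₁ h).re - (g₂ h).re = (((g₁ - g₂) : StrongDual ℂ (StrongDual ℂ X)) h).re := by
          rw [ContinuousLinearMap.sub_apply, Complex.sub_re]
        rw [e2]
        calc (((g₁ - g₂) : StrongDual ℂ (StrongDual ℂ X)) h).re ≤ ‖_‖ := Complex.re_le_norm _
        _ = ‖((g₁ - g₂) : StrongDual ℂ (StrongDual ℂ X)) h‖ := rfl
        _ ≤ ‖g₁ - g₂‖ * ‖h‖ := (g₁ - g₂).le_opNorm _
      have b4 : ‖g₁ - g₂‖ * ‖h‖ < ε * ‖h‖ := by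
        apply mul_lt_mul_of_pos_right hg₁g₂ hhp
      linarith
    show dist ((‖xs + h‖ + ‖xs - h‖ - 2 * R) / ‖h‖) 0 < ε
    rw [Real.dist_eq, sub_zero, abs_of_nonneg (div_nonneg hN0 hhp.le), div_lt_iff₀ hhp]
    linarith
end

section
/- Let X be a Banach space and suppose there exists n ∈ ℕ such that for every x ∈ X with x ≠ 0 and every h ∈ X, lim_{ℝ ∋ t → 0} (‖x + t·h‖^{2^n} + ‖x − t·h‖^{2^n} − 2‖x‖^{2^n})/t = 0. Then the norm of X is Gâteaux differentiable, i.e., for every a ∈ X with a ≠ 0 and every h ∈ X, the limit lim_{ℝ ∋ t → 0} (‖a + t·h‖ − ‖a‖)/t exists. -/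
open Filter Topology

/-- If for some `n`, for every `x ≠ 0` and every `h` the symmetric difference quotient
of the `2^n`-th power of the norm tends to `0`, then the norm is Gâteaux
differentiable. -/
theorem pow_symmetric_limit_zero_implies_gateaux
    (X : Type*) [NormedAddCommGroup X] [NormedSpace ℝ X] [CompleteSpace X]
    (hn : ∃ n : ℕ, ∀ x : X, x ≠ 0 → ∀ h : X,
      Tendsto
        (fun t : ℝ =>
          (‖x + t • h‖ ^ (2 ^ n) + ‖x - t • h‖ ^ (2 ^ n) - 2 * ‖x‖ ^ (2 ^ n)) / t)
        (𝓝[≠] (0 : ℝ)) (𝓝 0)) :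
    ∀ a : X, a ≠ 0 → ∀ h : X, ∃ L : ℝ,
      Tendsto (fun t : ℝ => (‖a + t • h‖ - ‖a‖) / t) (𝓝[≠] (0 : ℝ)) (𝓝 L) := by
  obtain ⟨n, hyp⟩ := hn
  intro a ha h
  set m : ℕ := 2 ^ n with hmdef
  have hm1 : 1 ≤ m := Nat.one_le_two_pow
  set c : ℝ := ‖a‖ with hcdef
  have hc : 0 < c := norm_pos_iff.2 ha
  set f : ℝ → ℝ := fun t => ‖a + t • h‖ with hfdef
  have hf0 : f 0 = c := by simp [hfdef, hcdef]
  have hcont : Continuous f := by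
    apply Continuous.norm
    exact continuous_const.add (continuous_id.smul continuous_const)
  have hlip : ∀ t : ℝ, |f t - c| ≤ ‖h‖ * |t| := by
    intro t
    have h2 : (a + t • h) - a = t • h := by abel
    calc |f t - c| = |‖a + t • h‖ - ‖a‖| := rfl
      _ ≤ ‖(a + t • h) - a‖ := abs_norm_sub_norm_le _ _
      _ = ‖h‖ * |t| := by rw [h2, norm_smul, Real.norm_eq_abs, mul_comm]
  have hfneg : ∀ t : ℝ, f (-t) = ‖a - t • h‖ := by
    intro t; simp [hfdef, sub_eq_add_neg]
  -- Step A: symmetric quotient of `f` tends to 0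
  set D : ℝ := (m : ℝ) * c ^ (m - 1) with hDdef
  have hD : 0 < D := by
    apply mul_pos
    · exact_mod_cast Nat.lt_of_lt_of_le Nat.zero_lt_one hm1
    · positivity
  have hderiv : HasDerivAt (fun x : ℝ => x ^ m) D c := hasDerivAt_pow m c
  have hlo : (fun x : ℝ => x ^ m - c ^ m - (x - c) * D) =o[𝓝 c] fun x => x - c := by
    have := hasDerivAt_iff_isLittleO.1 hderiv
    simpa [smul_eq_mul, mul_comm] using this
  have htends : Tendsto f (𝓝[≠] (0 : ℝ)) (𝓝 c) := by
    have : Tendsto f (𝓝 (0 : ℝ)) (𝓝 c) := by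
      simpa [hf0] using hcont.tendsto 0
    exact this.mono_left nhdsWithin_le_nhds
  have htendsneg : Tendsto (fun t => f (-t)) (𝓝[≠] (0 : ℝ)) (𝓝 c) := by
    have : Tendsto (fun t : ℝ => f (-t)) (𝓝 (0 : ℝ)) (𝓝 c) := by
      have := (hcont.comp continuous_neg).tendsto 0
      simpa [hf0, Function.comp_def] using this
    exact this.mono_left nhdsWithin_le_nhds
  have hbigO : (fun t : ℝ => f t - c) =O[𝓝[≠] (0 : ℝ)] fun t => t := by
    rw [Asymptotics.isBigO_iff]
    exact ⟨‖h‖, Eventually.of_forall fun t => by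
      simpa [Real.norm_eq_abs] using hlip t⟩
  have hbigOneg : (fun t : ℝ => f (-t) - c) =O[𝓝[≠] (0 : ℝ)] fun t => t := by
    rw [Asymptotics.isBigO_iff]
    exact ⟨‖h‖, Eventually.of_forall fun t => by
      simpa [Real.norm_eq_abs] using hlip (-t)⟩
  have o1 : (fun t : ℝ => (f t) ^ m - c ^ m - (f t - c) * D) =o[𝓝[≠] (0 : ℝ)]
      fun t => t :=
    ((hlo.comp_tendsto htends).trans_isBigO hbigO)
  have o2 : (fun t : ℝ => (f (-t)) ^ m - c ^ m - (f (-t) - c) * D) =o[𝓝[≠] (0 : ℝ)]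
      fun t => t :=
    ((hlo.comp_tendsto htendsneg).trans_isBigO hbigOneg)
  have oE : (fun t : ℝ => ((f t) ^ m + (f (-t)) ^ m - 2 * c ^ m)
      - (f t + f (-t) - 2 * c) * D) =o[𝓝[≠] (0 : ℝ)] fun t => t := by
    have := o1.add o2
    apply this.congr_left
    intro t; ring
  have hEdiv : Tendsto (fun t : ℝ => (((f t) ^ m + (f (-t)) ^ m - 2 * c ^ m)
      - (f t + f (-t) - 2 * c) * D) / t) (𝓝[≠] (0 : ℝ)) (𝓝 0) :=
    oE.tendsto_div_nhds_zero
  have hpq : Tendsto (fun t : ℝ => ((f t) ^ m + (f (-t)) ^ m - 2 * c ^ m) / t)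
      (𝓝[≠] (0 : ℝ)) (𝓝 0) := by
    have := hyp a ha h
    apply this.congr
    intro t
    rw [hfneg t]
  have symA : Tendsto (fun t : ℝ => (f t + f (-t) - 2 * c) / t) (𝓝[≠] (0 : ℝ)) (𝓝 0) := by
    have key : Tendsto (fun t : ℝ => ((f t + f (-t) - 2 * c) / t) * D)
        (𝓝[≠] (0 : ℝ)) (𝓝 0) := by
      have := hpq.sub hEdiv
      rw [sub_zero] at this
      apply this.congr
      intro t
      ring
    have := key.div_const D
    rw [zero_div] at this
    apply this.congr
    intro t
    rw [mul_div_assoc, div_self (ne_of_gt hD), mul_one]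
  -- Step B: convexity
  have hconv : ConvexOn ℝ Set.univ f := by
    refine ⟨convex_univ, ?_⟩
    intro x _ y _ p q hp hq hpq
    have key : a + (p • x + q • y) • h = p • (a + x • h) + q • (a + y • h) := by
      have h1 : p • a + q • a = a := by rw [← add_smul, hpq, one_smul]
      rw [smul_add, smul_add, smul_eq_mul, smul_eq_mul, add_smul, mul_smul, mul_smul]
      rw [show p • a + p • x • h + (q • a + q • y • h)
        = (p • a + q • a) + (p • (x • h) + q • (y • h)) by abel, h1]
    calc f (p • x + q • y) = ‖p • (a + x • h) + q • (a + y • h)‖ := by rw [hfdef]; simp only; rw [key]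
      _ ≤ ‖p • (a + x • h)‖ + ‖q • (a + y • h)‖ := norm_add_le _ _
      _ = p * f x + q * f y := by
          rw [norm_smul, norm_smul, Real.norm_eq_abs, Real.norm_eq_abs,
            abs_of_nonneg hp, abs_of_nonneg hq]
  set S : ℝ → ℝ := fun t => (f t - c) / t with hSdef
  have hsec : ∀ x y : ℝ, x ≠ 0 → y ≠ 0 → x ≤ y → S x ≤ S y := by
    intro x y hx hy hxy
    have := hconv.secant_mono (a := 0) (Set.mem_univ 0) (Set.mem_univ x)
      (Set.mem_univ y) hx hy hxy
    simpa [hSdef, hf0] using this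
  have monoIoi : MonotoneOn S (Set.Ioi (0 : ℝ)) := fun x hx y hy hxy =>
    hsec x y (ne_of_gt hx) (ne_of_gt hy) hxy
  have monoIio : MonotoneOn S (Set.Iio (0 : ℝ)) := fun x hx y hy hxy =>
    hsec x y (ne_of_lt hx) (ne_of_lt hy) hxy
  have bddB : BddBelow (S '' Set.Ioi (0 : ℝ)) := by
    refine ⟨S (-1), ?_⟩
    rintro _ ⟨t, ht, rfl⟩
    exact hsec (-1) t (by norm_num) (ne_of_gt ht) (by linarith [Set.mem_Ioi.1 ht])
  have bddA : BddAbove (S '' Set.Iio (0 : ℝ)) := by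
    refine ⟨S 1, ?_⟩
    rintro _ ⟨t, ht, rfl⟩
    exact hsec t 1 (ne_of_lt ht) (by norm_num) (by linarith [Set.mem_Iio.1 ht])
  set Lp : ℝ := sInf (S '' Set.Ioi (0 : ℝ)) with hLp
  set Lm : ℝ := sSup (S '' Set.Iio (0 : ℝ)) with hLm
  have tendR : Tendsto S (𝓝[>] (0 : ℝ)) (𝓝 Lp) := monoIoi.tendsto_nhdsGT bddB
  have tendL : Tendsto S (𝓝[<] (0 : ℝ)) (𝓝 Lm) := monoIio.tendsto_nhdsLT bddA
  -- the symmetric limit forces Lp = Lm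
  have hnegmap : Tendsto (fun t : ℝ => -t) (𝓝[>] (0 : ℝ)) (𝓝[<] (0 : ℝ)) := by
    rw [tendsto_nhdsWithin_iff]
    constructor
    · have : Tendsto (fun t : ℝ => -t) (𝓝 (0 : ℝ)) (𝓝 (-0)) := continuous_neg.tendsto 0
      rw [neg_zero] at this
      exact this.mono_left nhdsWithin_le_nhds
    · filter_upwards [self_mem_nhdsWithin] with t ht
      simpa using Set.mem_Ioi.1 ht
  have tendSneg : Tendsto (fun t : ℝ => S (-t)) (𝓝[>] (0 : ℝ)) (𝓝 Lm) :=
    tendL.comp hnegmap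
  have hdiff : Tendsto (fun t : ℝ => S t - S (-t)) (𝓝[>] (0 : ℝ)) (𝓝 (Lp - Lm)) :=
    tendR.sub tendSneg
  have hsymR : Tendsto (fun t : ℝ => S t - S (-t)) (𝓝[>] (0 : ℝ)) (𝓝 0) := by
    have hle : (𝓝[>] (0 : ℝ)) ≤ 𝓝[≠] (0 : ℝ) :=
      nhdsWithin_mono 0 fun x hx => ne_of_gt (Set.mem_Ioi.1 hx)
    have hev : (fun t : ℝ => (f t + f (-t) - 2 * c) / t) =ᶠ[𝓝[>] (0 : ℝ)]
        fun t => S t - S (-t) := by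
      filter_upwards [self_mem_nhdsWithin] with t ht
      have e : f t + f (-t) - 2 * c = (f t - c) + (f (-t) - c) := by ring
      simp only [hSdef]
      rw [e, add_div, div_neg, sub_neg_eq_add]
    exact Tendsto.congr' hev (symA.mono_left hle)
  have hLpm : Lp = Lm := by
    have := tendsto_nhds_unique hdiff hsymR
    linarith
  refine ⟨Lp, ?_⟩
  have final : Tendsto S (𝓝[≠] (0 : ℝ)) (𝓝 Lp) := by
    rw [← nhdsLT_sup_nhdsGT (0 : ℝ), tendsto_sup]
    exact ⟨hLpm ▸ tendL, tendR⟩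
  exact final
end

section
/- Let (Ω, μ) be a probability space, X a Banach space, and n ∈ ℕ with n ≥ 1; set r = 2^n. If the norm of the dual X* is Gâteaux differentiable (for every a ∈ X* with a ≠ 0 and every h ∈ X*, lim_{ℝ ∋ t → 0} (‖a + t·h‖ − ‖a‖)/t exists), then the norm of the Bochner space L^r(Ω, μ; X*) is Gâteaux differentiable: for every f ∈ L^r(Ω, μ; X*) with f ≠ 0 and every h ∈ L^r(Ω, μ; X*), lim_{ℝ ∋ t → 0} (‖f + t·h‖_{L^r} − ‖f‖_{L^r})/t exists; equivalently, lim_{ℝ ∋ t → 0} (‖f + t·h‖_{L^r}^r + ‖f − t·h‖_{L^r}^r − 2‖f‖_{L^r}^r)/t = 0. -/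
open NormedSpace Filter Topology MeasureTheory

private lemma gateaux_pow_hasDerivAt {𝕜 : Type*} [RCLike 𝕜] {E : Type*}
    [NormedAddCommGroup E] [NormedSpace 𝕜 E] (r : ℕ) (hr2 : 2 ≤ r) (hre : Even r)
    (hg : ∀ a : E, a ≠ 0 → ∀ h : E, ∃ L : ℝ,
      Tendsto (fun t : ℝ => (‖a + ((t : 𝕜)) • h‖ - ‖a‖) / t) (𝓝[≠] (0 : ℝ)) (𝓝 L))
    (a h : E) (t : ℝ) :
    ∃ d : ℝ, HasDerivAt (fun s : ℝ => ‖a + ((s : 𝕜)) • h‖ ^ r) d t ∧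
      |d| ≤ r * ‖a + ((t : 𝕜)) • h‖ ^ (r - 1) * ‖h‖ := by
  by_cases hb : a + ((t : 𝕜)) • h = 0
  · refine ⟨0, ?_, by rw [abs_zero]; positivity⟩
    have key : ∀ s : ℝ, ‖a + ((s : 𝕜)) • h‖ ^ r = (s - t) ^ r * ‖h‖ ^ r := by
      intro s
      have ha : a = -(((t : 𝕜)) • h) := eq_neg_of_add_eq_zero_left hb
      have h2 : a + ((s : 𝕜)) • h = (((s - t : ℝ) : 𝕜)) • h := by
        rw [ha]
        push_cast
        rw [sub_smul]
        abel
      rw [h2, norm_smul, RCLike.norm_ofReal, mul_pow, hre.pow_abs]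
    have hD : HasDerivAt (fun s : ℝ => (s - t) ^ r * ‖h‖ ^ r)
        ((↑r * (t - t) ^ (r - 1) * 1) * ‖h‖ ^ r) t :=
      (((hasDerivAt_id t).sub_const t).pow r).mul_const _
    have h0 : (↑r * (t - t) ^ (r - 1) * 1) * ‖h‖ ^ r = (0 : ℝ) := by
      rw [sub_self, zero_pow (by omega : r - 1 ≠ 0)]; ring
    rw [h0] at hD
    have hfun : (fun s : ℝ => ‖a + ((s : 𝕜)) • h‖ ^ r) =
        fun s : ℝ => (s - t) ^ r * ‖h‖ ^ r := funext key
    rw [hfun]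
    exact hD
  · obtain ⟨L, hL⟩ := hg _ hb h
    set b := a + ((t : 𝕜)) • h with hbdef
    have hg0 : HasDerivAt (fun s : ℝ => ‖b + ((s : 𝕜)) • h‖) L 0 := by
      rw [hasDerivAt_iff_tendsto_slope]
      have hsl : slope (fun s : ℝ => ‖b + ((s : 𝕜)) • h‖) 0 =
          fun s : ℝ => (‖b + ((s : 𝕜)) • h‖ - ‖b‖) / s := by
        funext s
        rw [slope_def_field]
        simp
      rw [hsl]
      exact hL
    have hN : HasDerivAt (fun s : ℝ => ‖a + ((s : 𝕜)) • h‖) L t := by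
      have hu : HasDerivAt (fun s : ℝ => s - t) 1 t := (hasDerivAt_id t).sub_const t
      have h0 : HasDerivAt (fun s : ℝ => ‖b + ((s : 𝕜)) • h‖) L ((fun s : ℝ => s - t) t) := by
        simpa using hg0
      have hcomp : HasDerivAt ((fun s : ℝ => ‖b + ((s : 𝕜)) • h‖) ∘ (fun s : ℝ => s - t))
          (L * 1) t := HasDerivAt.comp t h0 hu
      have key : ((fun s : ℝ => ‖b + ((s : 𝕜)) • h‖) ∘ (fun s : ℝ => s - t)) =
          fun s : ℝ => ‖a + ((s : 𝕜)) • h‖ := by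
        funext s
        simp only [Function.comp]
        congr 1
        rw [hbdef]
        push_cast
        rw [sub_smul]
        abel
      rw [key] at hcomp
      simpa using hcomp
    refine ⟨_, hN.pow r, ?_⟩
    have hLb : |L| ≤ ‖h‖ := by
      have ev : ∀ᶠ (s : ℝ) in 𝓝[≠] (0 : ℝ), |(‖b + ((s : 𝕜)) • h‖ - ‖b‖) / s| ≤ ‖h‖ := by
        filter_upwards [self_mem_nhdsWithin] with s hs
        have hs0 : s ≠ 0 := hs
        rw [abs_div, div_le_iff₀ (abs_pos.mpr hs0)]
        have h1 : |‖b + ((s : 𝕜)) • h‖ - ‖b‖| ≤ ‖((s : 𝕜)) • h‖ := by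
          have := abs_norm_sub_norm_le (b + ((s : 𝕜)) • h) b
          simpa using this
        rw [norm_smul, RCLike.norm_ofReal] at h1
        calc |‖b + ((s : 𝕜)) • h‖ - ‖b‖| ≤ |s| * ‖h‖ := h1
          _ = ‖h‖ * |s| := mul_comm _ _
      exact le_of_tendsto hL.abs ev
    calc |↑r * ‖b‖ ^ (r - 1) * L| = ↑r * ‖b‖ ^ (r - 1) * |L| := by
          rw [abs_mul, abs_mul, abs_of_nonneg (by positivity : (0:ℝ) ≤ (r : ℝ)),
            abs_of_nonneg (by positivity : (0:ℝ) ≤ ‖b‖ ^ (r - 1))]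
      _ ≤ ↑r * ‖b‖ ^ (r - 1) * ‖h‖ := by gcongr
set_option maxHeartbeats 1000000 in
/-- If the norm of the dual `X*` of a Banach space `X` (over `ℝ` or `ℂ`) is Gâteaux
differentiable, then so is the norm of the Bochner space `L^r(Ω, μ; X*)` where
`r = 2^n`, `n ≥ 1`, and `μ` is a probability measure; moreover the symmetric
difference quotient of the `r`-th power of the norm tends to `0`. -/
theorem lp_dual_gateaux_of_dual_gateaux
    {Ω : Type*} [MeasurableSpace Ω] (μ : Measure Ω) [IsProbabilityMeasure μ]
    (𝕜 : Type*) [RCLike 𝕜]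
    (X : Type*) [NormedAddCommGroup X] [NormedSpace 𝕜 X] [CompleteSpace X]
    (n : ℕ) (hn : 1 ≤ n) [Fact (1 ≤ (2 : ENNReal) ^ n)]
    (hg : ∀ a : StrongDual 𝕜 X, a ≠ 0 → ∀ h : StrongDual 𝕜 X, ∃ L : ℝ,
      Tendsto (fun t : ℝ => (‖a + ((t : 𝕜)) • h‖ - ‖a‖) / t) (𝓝[≠] (0 : ℝ)) (𝓝 L)) :
    ∀ f : Lp (StrongDual 𝕜 X) ((2 : ENNReal) ^ n) μ, f ≠ 0 →
      ∀ h : Lp (StrongDual 𝕜 X) ((2 : ENNReal) ^ n) μ,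
        (∃ L : ℝ,
          Tendsto (fun t : ℝ => (‖f + ((t : 𝕜)) • h‖ - ‖f‖) / t)
            (𝓝[≠] (0 : ℝ)) (𝓝 L)) ∧
        Tendsto
          (fun t : ℝ =>
            (‖f + ((t : 𝕜)) • h‖ ^ (2 ^ n) + ‖f - ((t : 𝕜)) • h‖ ^ (2 ^ n)
              - 2 * ‖f‖ ^ (2 ^ n)) / t)
          (𝓝[≠] (0 : ℝ)) (𝓝 0) := by
  intro f hf h
  set r : ℕ := 2 ^ n with hrdef
  have hr2 : 2 ≤ r := by
    calc 2 = 2 ^ 1 := (pow_one 2).symm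
      _ ≤ 2 ^ n := Nat.pow_le_pow_right (by norm_num) hn
  have hr0 : r ≠ 0 := by omega
  have hre : Even r := (Nat.even_pow).mpr ⟨even_two, by omega⟩
  have hp0 : ((2 : ENNReal) ^ n) ≠ 0 := pow_ne_zero n (by norm_num)
  have hptop : ((2 : ENNReal) ^ n) ≠ ⊤ := ENNReal.pow_ne_top (by norm_num)
  have hpr : ((2 : ENNReal) ^ n).toReal = (r : ℝ) := by
    rw [ENNReal.toReal_pow, ENNReal.toReal_ofNat, hrdef]
    push_cast
    ring
  -- norm to the r equals integral of pointwise norm to the r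
  have normpow : ∀ g : Lp (StrongDual 𝕜 X) ((2 : ENNReal) ^ n) μ,
      ‖g‖ ^ r = ∫ ω, ‖g ω‖ ^ r ∂μ := by
    intro g
    have hm := Lp.memLp g
    have h1 : ‖g‖ = (∫ ω, ‖g ω‖ ^ r ∂μ) ^ ((r : ℝ))⁻¹ := by
      rw [Lp.norm_def, hm.eLpNorm_eq_integral_rpow_norm hp0 hptop,
        ENNReal.toReal_ofReal (by positivity), hpr]
      simp_rw [Real.rpow_natCast]
    have hint : (0 : ℝ) ≤ ∫ ω, ‖g ω‖ ^ r ∂μ :=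
      integral_nonneg fun ω => by positivity
    rw [h1, Real.rpow_inv_natCast_pow hint hr0]
  have subeq : ∀ t : ℝ, f - ((t : 𝕜)) • h = f + (((-t : ℝ) : 𝕜)) • h := by
    intro t
    push_cast
    rw [neg_smul, sub_eq_add_neg]
  -- key functions
  have key : ∀ t : ℝ, ‖f + ((t : 𝕜)) • h‖ ^ r = ∫ ω, ‖f ω + ((t : 𝕜)) • h ω‖ ^ r ∂μ := by
    intro t
    rw [normpow]
    refine integral_congr_ae ?_
    filter_upwards [Lp.coeFn_add f (((t : 𝕜)) • h), Lp.coeFn_smul ((t : 𝕜)) h] with ω h1 h2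
    simp only [Pi.add_apply] at h1
    simp only [Pi.smul_apply] at h2
    rw [h1, h2]
  have meas : ∀ t : ℝ, AEStronglyMeasurable (fun ω => ‖f ω + ((t : 𝕜)) • h ω‖ ^ r) μ := by
    intro t
    exact (continuous_pow r).comp_aestronglyMeasurable
      (((Lp.aestronglyMeasurable f).add ((Lp.aestronglyMeasurable h).const_smul ((t : 𝕜)))).norm)
  have hmem : ∀ t : ℝ, MemLp (fun ω => f ω + ((t : 𝕜)) • h ω) ((2 : ENNReal) ^ n) μ :=
    fun t => (Lp.memLp f).add ((Lp.memLp h).const_smul ((t : 𝕜)))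
  have hFint : ∀ t : ℝ, Integrable (fun ω => ‖f ω + ((t : 𝕜)) • h ω‖ ^ r) μ := by
    intro t
    have h2 := (hmem t).integrable_norm_rpow hp0 hptop
    rw [hpr] at h2
    simp_rw [Real.rpow_natCast] at h2
    exact h2
  -- pointwise derivatives
  have hder : ∀ (ω : Ω) (t : ℝ),
      HasDerivAt (fun s : ℝ => ‖f ω + ((s : 𝕜)) • h ω‖ ^ r)
        (deriv (fun s : ℝ => ‖f ω + ((s : 𝕜)) • h ω‖ ^ r) t) t ∧
      |deriv (fun s : ℝ => ‖f ω + ((s : 𝕜)) • h ω‖ ^ r) t| ≤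
        r * ‖f ω + ((t : 𝕜)) • h ω‖ ^ (r - 1) * ‖h ω‖ := by
    intro ω t
    obtain ⟨d, hd, hdb⟩ := gateaux_pow_hasDerivAt (𝕜 := 𝕜) r hr2 hre hg (f ω) (h ω) t
    have hdd : deriv (fun s : ℝ => ‖f ω + ((s : 𝕜)) • h ω‖ ^ r) t = d := hd.deriv
    rw [hdd]
    exact ⟨hd, hdb⟩
  -- the bound
  have hbmem : MemLp (fun ω => ‖f ω‖ + ‖h ω‖) ((2 : ENNReal) ^ n) μ :=
    (Lp.memLp f).norm.add (Lp.memLp h).norm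
  have hbi : Integrable (fun ω => (r : ℝ) * (‖f ω‖ + ‖h ω‖) ^ r) μ := by
    have h2 := hbmem.integrable_norm_rpow hp0 hptop
    rw [hpr] at h2
    simp_rw [Real.rpow_natCast, Real.norm_eq_abs] at h2
    have h3 : Integrable (fun ω => (‖f ω‖ + ‖h ω‖) ^ r) μ := by
      refine h2.congr (ae_of_all _ fun ω => ?_)
      dsimp only
      rw [abs_of_nonneg (by positivity)]
    exact h3.const_mul _
  have h_bound : ∀ᵐ ω ∂μ, ∀ t ∈ Metric.ball (0 : ℝ) 1,
      ‖deriv (fun s : ℝ => ‖f ω + ((s : 𝕜)) • h ω‖ ^ r) t‖ ≤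
        (r : ℝ) * (‖f ω‖ + ‖h ω‖) ^ r := by
    refine ae_of_all _ fun ω t ht => ?_
    have h2 := (hder ω t).2
    have ht1 : |t| ≤ 1 := by
      rw [Metric.mem_ball, Real.dist_eq, sub_zero] at ht
      exact ht.le
    have hxy : ‖f ω + ((t : 𝕜)) • h ω‖ ≤ ‖f ω‖ + ‖h ω‖ := by
      refine (norm_add_le _ _).trans ?_
      rw [norm_smul, RCLike.norm_ofReal]
      nlinarith [norm_nonneg (h ω), abs_nonneg t]
    have hhle : ‖h ω‖ ≤ ‖f ω‖ + ‖h ω‖ := le_add_of_nonneg_left (norm_nonneg _)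
    rw [Real.norm_eq_abs]
    calc |deriv (fun s : ℝ => ‖f ω + ((s : 𝕜)) • h ω‖ ^ r) t|
        ≤ r * ‖f ω + ((t : 𝕜)) • h ω‖ ^ (r - 1) * ‖h ω‖ := h2
      _ ≤ r * (‖f ω‖ + ‖h ω‖) ^ (r - 1) * (‖f ω‖ + ‖h ω‖) := by gcongr
      _ = (r : ℝ) * (‖f ω‖ + ‖h ω‖) ^ r := by
          rw [mul_assoc, ← pow_succ, (by omega : r - 1 + 1 = r)]
  -- measurability of the derivative at 0
  have seq_tendsto : Tendsto (fun k : ℕ => ((k : ℝ) + 1)⁻¹) atTop (𝓝[≠] (0 : ℝ)) := by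
    refine tendsto_nhdsWithin_of_tendsto_nhds_of_eventually_within _ ?_ ?_
    · have := tendsto_one_div_add_atTop_nhds_zero_nat (𝕜 := ℝ)
      simpa [one_div] using this
    · exact Eventually.of_forall fun k =>
        (by positivity : (0 : ℝ) < ((k : ℝ) + 1)⁻¹).ne'
  have hF'meas : AEStronglyMeasurable
      (fun ω => deriv (fun s : ℝ => ‖f ω + ((s : 𝕜)) • h ω‖ ^ r) 0) μ := by
    refine aestronglyMeasurable_of_tendsto_ae atTop
      (f := fun (k : ℕ) (ω : Ω) =>
        (‖f ω + (((((k : ℝ) + 1)⁻¹ : ℝ)) : 𝕜) • h ω‖ ^ r - ‖f ω + (((0 : ℝ) : 𝕜)) • h ω‖ ^ r)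
          * ((k : ℝ) + 1))
      (fun k => ((meas _).sub (meas _)).mul_const _) ?_
    refine ae_of_all _ fun ω => ?_
    have h1 := (hder ω 0).1
    rw [hasDerivAt_iff_tendsto_slope] at h1
    have h2 := h1.comp seq_tendsto
    have heq : (fun k : ℕ =>
        (‖f ω + (((((k : ℝ) + 1)⁻¹ : ℝ)) : 𝕜) • h ω‖ ^ r - ‖f ω + (((0 : ℝ) : 𝕜)) • h ω‖ ^ r)
          * ((k : ℝ) + 1)) =
        (fun k : ℕ => slope (fun s : ℝ => ‖f ω + ((s : 𝕜)) • h ω‖ ^ r) 0 (((k : ℝ) + 1)⁻¹)) := by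
      funext k
      rw [slope_def_field, sub_zero, div_eq_mul_inv, inv_inv]
    rw [heq]
    exact h2
  -- differentiate under the integral
  have main := hasDerivAt_integral_of_dominated_loc_of_deriv_le (μ := μ) (x₀ := (0 : ℝ))
    (F := fun (t : ℝ) (ω : Ω) => ‖f ω + ((t : 𝕜)) • h ω‖ ^ r)
    (F' := fun (t : ℝ) (ω : Ω) => deriv (fun s : ℝ => ‖f ω + ((s : 𝕜)) • h ω‖ ^ r) t)
    (bound := fun ω => (r : ℝ) * (‖f ω‖ + ‖h ω‖) ^ r)
    (Metric.ball_mem_nhds (0 : ℝ) one_pos) (Eventually.of_forall fun t => meas t) (hFint 0) hF'meas h_bound hbi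
    (ae_of_all _ fun ω t _ => (hder ω t).1)
  obtain ⟨-, hψ⟩ := main
  set ψ : ℝ → ℝ := fun t => ∫ ω, ‖f ω + ((t : 𝕜)) • h ω‖ ^ r ∂μ with hψdef
  set D : ℝ := ∫ ω, deriv (fun s : ℝ => ‖f ω + ((s : 𝕜)) • h ω‖ ^ r) 0 ∂μ with hDdef
  have hψf : ∀ t : ℝ, ψ t = ‖f + ((t : 𝕜)) • h‖ ^ r := fun t => (key t).symm
  have hψ0 : ψ 0 = ‖f‖ ^ r := by
    rw [hψf 0]
    norm_num
  have hψ0pos : 0 < ψ 0 := by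
    rw [hψ0]
    exact pow_pos (norm_pos_iff.mpr hf) r
  -- slope limits
  have slope_t : Tendsto (fun t : ℝ => (ψ t - ψ 0) / t) (𝓝[≠] (0 : ℝ)) (𝓝 D) := by
    have h1 := hψ
    rw [hasDerivAt_iff_tendsto_slope] at h1
    have heq : (fun t : ℝ => (ψ t - ψ 0) / t) = slope ψ 0 := by
      funext t
      rw [slope_def_field, sub_zero]
    rw [heq]
    exact h1
  have hneg : Tendsto (fun t : ℝ => -t) (𝓝[≠] (0 : ℝ)) (𝓝[≠] (0 : ℝ)) := by
    refine tendsto_nhdsWithin_of_tendsto_nhds_of_eventually_within _ ?_ ?_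
    · have h1 : Tendsto (fun t : ℝ => -t) (𝓝 (0 : ℝ)) (𝓝 (0 : ℝ)) := by
        simpa using continuous_neg.tendsto (0 : ℝ)
      exact h1.mono_left nhdsWithin_le_nhds
    · filter_upwards [self_mem_nhdsWithin] with t ht
      exact neg_ne_zero.mpr ht
  have slope_neg : Tendsto (fun t : ℝ => (ψ (-t) - ψ 0) / t) (𝓝[≠] (0 : ℝ)) (𝓝 (-D)) := by
    have h2 : Tendsto (fun t : ℝ => (ψ (-t) - ψ 0) / (-t)) (𝓝[≠] (0 : ℝ)) (𝓝 D) :=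
      slope_t.comp hneg
    have h3 : (fun t : ℝ => (ψ (-t) - ψ 0) / t) = fun t : ℝ => -((ψ (-t) - ψ 0) / (-t)) := by
      funext t
      rw [div_neg, neg_neg]
    rw [h3]
    simpa using h2.neg
  constructor
  · -- Gâteaux differentiability of the norm itself
    have hΦ : ∀ t : ℝ, ‖f + ((t : 𝕜)) • h‖ = (ψ t) ^ ((r : ℝ))⁻¹ := by
      intro t
      rw [hψf t]
      exact (Real.pow_rpow_inv_natCast (norm_nonneg _) hr0).symm
    have hΦ0 : ‖f‖ = (ψ 0) ^ ((r : ℝ))⁻¹ := by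
      have := hΦ 0
      simpa using this
    have hrpow : HasDerivAt (fun u : ℝ => u ^ ((r : ℝ))⁻¹)
        (((r : ℝ))⁻¹ * (ψ 0) ^ (((r : ℝ))⁻¹ - 1)) (ψ 0) :=
      Real.hasDerivAt_rpow_const (Or.inl hψ0pos.ne')
    have hcomp : HasDerivAt (fun t : ℝ => (ψ t) ^ ((r : ℝ))⁻¹)
        ((((r : ℝ))⁻¹ * (ψ 0) ^ (((r : ℝ))⁻¹ - 1)) * D) 0 := hrpow.comp 0 hψ
    refine ⟨(((r : ℝ))⁻¹ * (ψ 0) ^ (((r : ℝ))⁻¹ - 1)) * D, ?_⟩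
    rw [hasDerivAt_iff_tendsto_slope] at hcomp
    have heq : (fun t : ℝ => (‖f + ((t : 𝕜)) • h‖ - ‖f‖) / t) =
        slope (fun t : ℝ => (ψ t) ^ ((r : ℝ))⁻¹) 0 := by
      funext t
      rw [slope_def_field, sub_zero, hΦ t, hΦ0]
    rw [heq]
    exact hcomp
  · -- symmetric difference quotient of the r-th power
    have goal_eq : (fun t : ℝ =>
        (‖f + ((t : 𝕜)) • h‖ ^ r + ‖f - ((t : 𝕜)) • h‖ ^ r - 2 * ‖f‖ ^ r) / t) =
        fun t : ℝ => (ψ t - ψ 0) / t + (ψ (-t) - ψ 0) / t := by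
      funext t
      rw [subeq t, ← hψf t, ← hψf (-t), ← hψ0]
      ring
    rw [goal_eq]
    simpa using slope_t.add slope_neg
end
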